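/- Let M be a nonstandard model of IΣ₁, let I be a strong cut of M, and let M₀ be a submodel of M with M₀ = {(a)_i : i ∈ I} for some a ∈ M. Then M₀ is I-small in M: there exists d ∈ M with M₀ = {(d)_i : i ∈ I} and (d)_i ≠ (d)_j for all distinct i, j ∈ I. -/

import Mathlib

namespace ISigma

/-- Terms of the language of arithmetic `{+, ·, <, 0, 1}` with variables indexed by `ℕ`. -/
inductive Term : Type
  | var : ℕ → Term
  | zero : Term
  | one : Term
  | add : Term → Term → Term
  | mul : Term → Term → Term

/-- First-order formulas of the language of arithmetic, with unbounded and bounded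
quantifiers. -/
inductive Formula : Type
  | eq : Term → Term → Formula
  | lt : Term → Term → Formula
  | not : Formula → Formula
  | or : Formula → Formula → Formula
  | ex : ℕ → Formula → Formula
  | all : ℕ → Formula → Formula
  | bex : ℕ → Term → Formula → Formula
  | ball : ℕ → Term → Formula → Formula

/-- A Gödel numbering of terms. -/
def Term.code : Term → ℕ
  | .var n => Nat.pair 0 n
  | .zero => Nat.pair 1 0
  | .one => Nat.pair 2 0
  | .add s t => Nat.pair 3 (Nat.pair s.code t.code)
  | .mul s t => Nat.pair 4 (Nat.pair s.code t.code)

/-- A Gödel numbering of formulas. -/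
def Formula.code : Formula → ℕ
  | .eq s t => Nat.pair 0 (Nat.pair s.code t.code)
  | .lt s t => Nat.pair 1 (Nat.pair s.code t.code)
  | .not φ => Nat.pair 2 φ.code
  | .or φ ψ => Nat.pair 3 (Nat.pair φ.code ψ.code)
  | .ex n φ => Nat.pair 4 (Nat.pair n φ.code)
  | .all n φ => Nat.pair 5 (Nat.pair n φ.code)
  | .bex n t φ => Nat.pair 6 (Nat.pair n (Nat.pair t.code φ.code))
  | .ball n t φ => Nat.pair 7 (Nat.pair n (Nat.pair t.code φ.code))

/-- `Δ₀` formulas: only bounded quantifiers. -/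
inductive IsDelta0 : Formula → Prop
  | eq (s t) : IsDelta0 (.eq s t)
  | lt (s t) : IsDelta0 (.lt s t)
  | not {φ} : IsDelta0 φ → IsDelta0 (.not φ)
  | or {φ ψ} : IsDelta0 φ → IsDelta0 ψ → IsDelta0 (.or φ ψ)
  | bex (n t) {φ} : IsDelta0 φ → IsDelta0 (.bex n t φ)
  | ball (n t) {φ} : IsDelta0 φ → IsDelta0 (.ball n t φ)

/-- `Σ₁` formulas: existential quantifiers over a `Δ₀` matrix. -/
inductive IsSigma1 : Formula → Prop
  | delta0 {φ} : IsDelta0 φ → IsSigma1 φ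
  | ex (n) {φ} : IsSigma1 φ → IsSigma1 (.ex n φ)

/-- `Π₁` formulas: universal quantifiers over a `Δ₀` matrix. -/
inductive IsPi1 : Formula → Prop
  | delta0 {φ} : IsDelta0 φ → IsPi1 φ
  | all (n) {φ} : IsPi1 φ → IsPi1 (.all n φ)

variable {M N : Type} [CommSemiring M] [LinearOrder M] [IsStrictOrderedRing M] [CommSemiring N] [LinearOrder N] [IsStrictOrderedRing N]

/-- Evaluation of a term under a valuation. -/
def Term.eval (v : ℕ → M) : Term → M
  | .var n => v n
  | .zero => 0
  | .one => 1
  | .add s t => s.eval v + t.eval v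
  | .mul s t => s.eval v * t.eval v

/-- Update of a valuation at one variable. -/
def upd (v : ℕ → M) (n : ℕ) (a : M) : ℕ → M := fun m => if m = n then a else v m

/-- Tarskian satisfaction in the structure `M`. -/
def Formula.Sat : (ℕ → M) → Formula → Prop
  | v, .eq s t => s.eval v = t.eval v
  | v, .lt s t => s.eval v < t.eval v
  | v, .not φ => ¬ Formula.Sat v φ
  | v, .or φ ψ => Formula.Sat v φ ∨ Formula.Sat v ψ
  | v, .ex n φ => ∃ a : M, Formula.Sat (upd v n a) φ
  | v, .all n φ => ∀ a : M, Formula.Sat (upd v n a) φ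
  | v, .bex n t φ => ∃ a : M, a < t.eval v ∧ Formula.Sat (upd v n a) φ
  | v, .ball n t φ => ∀ a : M, a < t.eval v → Formula.Sat (upd v n a) φ

/-- Satisfaction relativized to a subset `S` of `M` (the substructure with domain `S`). -/
def Formula.SatIn (S : Set M) : (ℕ → M) → Formula → Prop
  | v, .eq s t => s.eval v = t.eval v
  | v, .lt s t => s.eval v < t.eval v
  | v, .not φ => ¬ Formula.SatIn S v φ
  | v, .or φ ψ => Formula.SatIn S v φ ∨ Formula.SatIn S v ψ
  | v, .ex n φ => ∃ a ∈ S, Formula.SatIn S (upd v n a) φ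
  | v, .all n φ => ∀ a ∈ S, Formula.SatIn S (upd v n a) φ
  | v, .bex n t φ => ∃ a ∈ S, a < t.eval v ∧ Formula.SatIn S (upd v n a) φ
  | v, .ball n t φ => ∀ a ∈ S, a < t.eval v → Formula.SatIn S (upd v n a) φ

/-- The induction scheme for a class `Γ` of formulas. -/
def InductionScheme (M : Type) [CommSemiring M] [LinearOrder M] [IsStrictOrderedRing M] (Γ : Formula → Prop) : Prop :=
  ∀ φ : Formula, Γ φ → ∀ (n : ℕ) (v : ℕ → M),
    Formula.Sat (upd v n (0 : M)) φ →
    (∀ x : M, Formula.Sat (upd v n x) φ → Formula.Sat (upd v n (x + 1)) φ) →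
    ∀ x : M, Formula.Sat (upd v n x) φ

/-- The base (PA⁻-style) axioms beyond the ordered-semiring structure:
every element is nonnegative and the order is discrete. -/
def BaseAxioms (M : Type) [CommSemiring M] [LinearOrder M] [IsStrictOrderedRing M] : Prop :=
  (∀ x : M, 0 ≤ x) ∧ (∀ x y : M, x < y → x + 1 ≤ y)

/-- `M ⊨ IΔ₀`. -/
def ModelsIDelta0 (M : Type) [CommSemiring M] [LinearOrder M] [IsStrictOrderedRing M] : Prop :=
  BaseAxioms M ∧ InductionScheme M IsDelta0

/-- `M ⊨ IΣ₁`. -/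
def ModelsISigma1 (M : Type) [CommSemiring M] [LinearOrder M] [IsStrictOrderedRing M] : Prop :=
  BaseAxioms M ∧ InductionScheme M IsSigma1

/-- `M ⊨ PA` (full induction). -/
def ModelsPA (M : Type) [CommSemiring M] [LinearOrder M] [IsStrictOrderedRing M] : Prop :=
  BaseAxioms M ∧ InductionScheme M (fun _ => True)

/-- `M` is nonstandard: some element is above all numerals. -/
def Nonstandard (M : Type) [CommSemiring M] [LinearOrder M] [IsStrictOrderedRing M] : Prop :=
  ∃ x : M, ∀ n : ℕ, (n : M) < x

/-- The standard cut `ℕ` of `M`: the set of values of numerals. -/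
def Std (M : Type) [CommSemiring M] [LinearOrder M] [IsStrictOrderedRing M] : Set M :=
  Set.range (fun n : ℕ => (n : M))

/-- A (proper) cut of `M`: a nonempty proper initial segment closed under successor. -/
def IsCut (I : Set M) : Prop :=
  I.Nonempty ∧ I ≠ Set.univ ∧ (∀ x ∈ I, ∀ y : M, y ≤ x → y ∈ I) ∧ ∀ x ∈ I, x + 1 ∈ I

/-- An initial segment of `M`. -/
def IsInitialSeg (S : Set M) : Prop := ∀ x ∈ S, ∀ y : M, y ≤ x → y ∈ S

/-- A submodel (substructure) of `M`: contains `0, 1` and is closed under `+` and `·`. -/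
def IsSubmodel (S : Set M) : Prop :=
  (0 : M) ∈ S ∧ (1 : M) ∈ S ∧ (∀ x ∈ S, ∀ y ∈ S, x + y ∈ S) ∧ ∀ x ∈ S, ∀ y ∈ S, x * y ∈ S

/-- `S ≺_{Σ₁} M`: a submodel satisfying the same `Σ₁` formulas (with parameters in `S`). -/
def Sigma1Elementary (S : Set M) : Prop :=
  IsSubmodel S ∧ ∀ φ : Formula, IsSigma1 φ → ∀ v : ℕ → M, (∀ n, v n ∈ S) →
    (Formula.SatIn S v φ ↔ Formula.Sat v φ)

/-- `S ≺ M`: a fully elementary submodel. -/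
def Elementary (S : Set M) : Prop :=
  IsSubmodel S ∧ ∀ φ : Formula, ∀ v : ℕ → M, (∀ n, v n ∈ S) →
    (Formula.SatIn S v φ ↔ Formula.Sat v φ)

/-- `x` is `Σ₁`-definable in `M` with parameters from `X`. -/
def Sigma1DefinableFrom (X : Set M) (x : M) : Prop :=
  ∃ φ : Formula, IsSigma1 φ ∧ ∃ v : ℕ → M, (∀ n, n ≠ 0 → v n ∈ X ∪ {0}) ∧
    ∀ y : M, Formula.Sat (upd v 0 y) φ ↔ y = x

/-- `K¹(M; X)`: the set of `Σ₁`-definable elements with parameters from `X`. -/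
def K1 (X : Set M) : Set M := {x | Sigma1DefinableFrom X x}

/-- `I¹(M; X)`: the downward closure of `K¹(M; X)`. -/
def I1 (X : Set M) : Set M := {x | ∃ a ∈ K1 X, x ≤ a}

/-- `x` is definable in `M` (by an arbitrary formula) with parameters from `X`. -/
def DefinableFrom (X : Set M) (x : M) : Prop :=
  ∃ φ : Formula, ∃ v : ℕ → M, (∀ n, n ≠ 0 → v n ∈ X ∪ {0}) ∧
    ∀ y : M, Formula.Sat (upd v 0 y) φ ↔ y = x

/-- `K(M; X)`: the set of elements definable with parameters from `X`. -/
def KAll (X : Set M) : Set M := {x | DefinableFrom X x}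

/-- An embedding (on all of `M`) of `L_A`-structures. -/
def IsHom (f : M → N) : Prop :=
  f 0 = 0 ∧ f 1 = 1 ∧ (∀ x y, f (x + y) = f x + f y) ∧
  (∀ x y, f (x * y) = f x * f y) ∧ ∀ x y : M, x < y ↔ f x < f y

/-- An embedding of the substructure with domain `S` into `N`. -/
def IsHomOn (f : M → N) (S : Set M) : Prop :=
  f 0 = 0 ∧ f 1 = 1 ∧ (∀ x ∈ S, ∀ y ∈ S, f (x + y) = f x + f y) ∧
  (∀ x ∈ S, ∀ y ∈ S, f (x * y) = f x * f y) ∧ ∀ x ∈ S, ∀ y ∈ S, (x < y ↔ f x < f y)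

/-- An initial embedding: the image is an initial segment. -/
def IsInitialEmb (f : M → N) : Prop := IsHom f ∧ IsInitialSeg (Set.range f)

/-- A proper initial embedding: the image is a proper initial segment. -/
def IsProperInitialEmb (f : M → N) : Prop := IsInitialEmb f ∧ Set.range f ≠ Set.univ

/-- The fixed-point set of a self-map. -/
def Fix (j : M → M) : Set M := {x | j x = x}

/-- An isomorphism between the substructures with domains `S` and `T`. -/
def SetIso (S T : Set M) : Prop := ∃ f : M → M, Set.BijOn f S T ∧ IsHomOn f S

/-- A fixed `Σ₁`-definable coding apparatus for `M ⊨ IΣ₁`: base-2 exponentiation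
(used for Ackermann membership) and a pairing function. -/
structure AckCoding (M : Type) [CommSemiring M] [LinearOrder M] [IsStrictOrderedRing M] where
  exp2 : M → M
  pair : M → M → M
  exp2_zero : exp2 0 = 1
  exp2_succ : ∀ x, exp2 (x + 1) = 2 * exp2 x
  exp2_sigma1 : ∃ φ : Formula, IsSigma1 φ ∧
    ∀ x y : M, exp2 x = y ↔ Formula.Sat (fun n => if n = 0 then x else y) φ
  pair_spec : ∀ x y, 2 * pair x y = (x + y) * (x + y + 1) + 2 * y

namespace AckCoding

variable (C : AckCoding M)

/-- Ackermann membership: the `x`-th bit of the binary expansion of `a` is `1`. -/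
def E (x a : M) : Prop :=
  ∃ q r : M, r < C.exp2 x ∧ a = q * C.exp2 (x + 1) + C.exp2 x + r

open Classical in
/-- `(a)_i`: the `i`-th entry of the sequence coded by `a` (the unique `z` with
`⟨i, z⟩ E a`, if it exists; `0` otherwise). -/
noncomputable def proj (a i : M) : M :=
  if h : ∃ z : M, C.E (C.pair i z) a ∧ ∀ z' : M, C.E (C.pair i z') a → z' = z
  then h.choose else 0

/-- The `I`-standard system of `M`: subsets of `I` of the form `I ∩ a_E`. -/
def SSy (I : Set M) : Set (Set M) := {X | ∃ a : M, X = {x ∈ I | C.E x a}}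

/-- The `I`-standard system of the submodel with domain `S`. -/
def SSyOn (S I : Set M) : Set (Set M) := {X | ∃ a ∈ S, X = {x ∈ I | C.E x a}}

/-- `I` is a strong cut of `M`: for every `M`-coded (partial) function whose domain
contains `I` there is `e > I` with `f(i) ∈ I ↔ f(i) < e` for all `i ∈ I`. -/
def StrongCut (I : Set M) : Prop :=
  IsCut I ∧
  ∀ c : M,
    (∀ x y y' : M, C.E (C.pair x y) c → C.E (C.pair x y') c → y = y') →
    (∀ i ∈ I, ∃ y : M, C.E (C.pair i y) c) →
    ∃ e : M, e ∉ I ∧ ∀ i ∈ I, ∀ y : M, C.E (C.pair i y) c → (y ∈ I ↔ y < e)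

/-- `X` is `I`-small: `X = {(a)_i : i ∈ I}` with the `(a)_i` pairwise distinct on `I`. -/
def ISmall (I X : Set M) : Prop :=
  ∃ a : M, X = {x | ∃ i ∈ I, C.proj a i = x} ∧
    ∀ i ∈ I, ∀ k ∈ I, i ≠ k → C.proj a i ≠ C.proj a k

/-- The substructure with domain `S` models `BΣ₁` (over `IΔ₀ + Exp`):
closure under exponentiation, `Δ₀`-induction and `Σ₁`-collection, relativized to `S`. -/
def ModelsBSigma1In (S : Set M) : Prop :=
  IsSubmodel S ∧ (∀ x ∈ S, C.exp2 x ∈ S) ∧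
  (∀ φ : Formula, IsDelta0 φ → ∀ (n : ℕ) (v : ℕ → M), (∀ m, v m ∈ S) →
    Formula.SatIn S (upd v n (0 : M)) φ →
    (∀ x ∈ S, Formula.SatIn S (upd v n x) φ → Formula.SatIn S (upd v n (x + 1)) φ) →
    ∀ x ∈ S, Formula.SatIn S (upd v n x) φ) ∧
  (∀ φ : Formula, IsSigma1 φ → ∀ (nx ny : ℕ) (v : ℕ → M) (u : M),
    (∀ m, v m ∈ S) → u ∈ S →
    (∀ x ∈ S, x < u → ∃ y ∈ S, Formula.SatIn S (upd (upd v nx x) ny y) φ) →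
    ∃ w ∈ S, ∀ x ∈ S, x < u → ∃ y ∈ S, y < w ∧ Formula.SatIn S (upd (upd v nx x) ny y) φ)

end AckCoding

/-- The substructure with domain `S` is 1-extendable: it has a proper end extension to a
model of `IΔ₀` with the same `Σ₁`-theory. -/
def OneExtendable (S : Set M) : Prop :=
  ∃ (N' : Type) (iN : CommSemiring N') (iO : LinearOrder N') (iS : IsStrictOrderedRing N'),
    ModelsIDelta0 N' ∧
    ∃ f : M → N',
      IsHomOn f S ∧
      IsInitialSeg (f '' S) ∧
      f '' S ≠ Set.univ ∧
      ∀ φ : Formula, IsSigma1 φ →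
        (Formula.SatIn S (fun _ => (0 : M)) φ ↔ Formula.Sat (fun _ => (0 : N')) φ)

/-- A recursive set of formulas (with respect to the fixed Gödel numbering). -/
def RecursiveSet (p : Set Formula) : Prop :=
  ∃ f : ℕ → Bool, Computable f ∧ ∀ φ : Formula, φ ∈ p ↔ f φ.code = true

/-- `M` is recursively saturated: every finitely realized recursive type with finitely
many parameters is realized. -/
def RecSat (M : Type) [CommSemiring M] [LinearOrder M] [IsStrictOrderedRing M] : Prop :=
  ∀ p : Set Formula, RecursiveSet p → ∀ v : ℕ → M, (∃ k, ∀ n ≥ k, v n = 0) →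
    (∀ s : Finset Formula, ↑s ⊆ p → ∃ a : M, ∀ φ ∈ s, Formula.Sat (upd v 0 a) φ) →
    ∃ a : M, ∀ φ ∈ p, Formula.Sat (upd v 0 a) φ

/-- The substructure with domain `S` is recursively saturated. -/
def RecSatIn (S : Set M) : Prop :=
  ∀ p : Set Formula, RecursiveSet p → ∀ v : ℕ → M, (∀ n, v n ∈ S) →
    (∃ k, ∀ n ≥ k, v n = 0) →
    (∀ s : Finset Formula, ↑s ⊆ p → ∃ a ∈ S, ∀ φ ∈ s, Formula.SatIn S (upd v 0 a) φ) →
    ∃ a ∈ S, ∀ φ ∈ p, Formula.SatIn S (upd v 0 a) φ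

end ISigma

namespace ISigma

/-! ### Layer 1: syntactic utilities -/

namespace Term

/-- Variables occurring in a term. -/
def vars : Term → Finset ℕ
  | .var n => {n}
  | .zero => ∅
  | .one => ∅
  | .add s t => s.vars ∪ t.vars
  | .mul s t => s.vars ∪ t.vars

/-- Rename variables of a term. -/
def rename (ρ : ℕ → ℕ) : Term → Term
  | .var n => .var (ρ n)
  | .zero => .zero
  | .one => .one
  | .add s t => .add (s.rename ρ) (t.rename ρ)
  | .mul s t => .mul (s.rename ρ) (t.rename ρ)

variable {M : Type} [CommSemiring M] [LinearOrder M] [IsStrictOrderedRing M]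

lemma eval_rename (ρ : ℕ → ℕ) (t : Term) (v : ℕ → M) :
    (t.rename ρ).eval v = t.eval (fun n => v (ρ n)) := by
  induction t <;> simp [rename, eval, *]

lemma eval_congr {t : Term} {v w : ℕ → M} (h : ∀ m ∈ t.vars, v m = w m) :
    t.eval v = t.eval w := by
  induction t with
  | var n => exact h n (by simp [vars])
  | zero => rfl
  | one => rfl
  | add s t ihs iht =>
      simp only [eval]
      rw [ihs (fun m hm => h m (by simp [vars, hm])),
          iht (fun m hm => h m (by simp [vars, hm]))]
  | mul s t ihs iht =>
      simp only [eval]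
      rw [ihs (fun m hm => h m (by simp [vars, hm])),
          iht (fun m hm => h m (by simp [vars, hm]))]

end Term

@[simp] lemma upd_same {M : Type} (v : ℕ → M) (n : ℕ) (a : M) : upd v n a n = a := by
  simp [upd]

lemma upd_ne {M : Type} (v : ℕ → M) {n m : ℕ} (a : M) (h : m ≠ n) : upd v n a m = v m := by
  simp [upd, h]

lemma upd_comm {M : Type} (v : ℕ → M) {n m : ℕ} (a b : M) (h : n ≠ m) :
    upd (upd v n a) m b = upd (upd v m b) n a := by
  funext k; by_cases hk : k = m <;> by_cases hk' : k = n <;>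
    simp [upd, hk, hk'] <;> simp_all

lemma upd_idem {M : Type} (v : ℕ → M) (n : ℕ) (a b : M) :
    upd (upd v n a) n b = upd v n b := by
  funext k; by_cases hk : k = n <;> simp [upd, hk]

namespace Formula

/-- All variables (free or bound) occurring in a formula. -/
def allVars : Formula → Finset ℕ
  | .eq s t => s.vars ∪ t.vars
  | .lt s t => s.vars ∪ t.vars
  | .not φ => φ.allVars
  | .or φ ψ => φ.allVars ∪ ψ.allVars
  | .ex n φ => insert n φ.allVars
  | .all n φ => insert n φ.allVars
  | .bex n t φ => insert n (t.vars ∪ φ.allVars)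
  | .ball n t φ => insert n (t.vars ∪ φ.allVars)

variable {M : Type} [CommSemiring M] [LinearOrder M] [IsStrictOrderedRing M]

lemma sat_congr : ∀ {φ : Formula} {v w : ℕ → M},
    (∀ m ∈ φ.allVars, v m = w m) → (Sat v φ ↔ Sat w φ) := by
  intro φ
  induction φ with
  | eq s t =>
      intro v w h
      simp only [Sat]
      rw [Term.eval_congr (fun m hm => h m (by simp [allVars, hm])),
          Term.eval_congr (fun m hm => h m (by simp [allVars, hm]))]
  | lt s t =>
      intro v w h
      simp only [Sat]
      rw [Term.eval_congr (fun m hm => h m (by simp [allVars, hm])),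
          Term.eval_congr (fun m hm => h m (by simp [allVars, hm]))]
  | not φ ih =>
      intro v w h
      simp only [Sat]
      rw [ih h]
  | or φ ψ ihφ ihψ =>
      intro v w h
      simp only [Sat]
      rw [ihφ (fun m hm => h m (by simp [allVars, hm])),
          ihψ (fun m hm => h m (by simp [allVars, hm]))]
  | ex n φ ih =>
      intro v w h
      simp only [Sat]
      refine exists_congr fun a => ih fun m hm => ?_
      by_cases hmn : m = n
      · subst hmn; simp [upd]
      · rw [upd_ne _ _ hmn, upd_ne _ _ hmn]
        exact h m (by simp [allVars, hm])
  | all n φ ih =>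
      intro v w h
      simp only [Sat]
      refine forall_congr' fun a => ih fun m hm => ?_
      by_cases hmn : m = n
      · subst hmn; simp [upd]
      · rw [upd_ne _ _ hmn, upd_ne _ _ hmn]
        exact h m (by simp [allVars, hm])
  | bex n t φ ih =>
      intro v w h
      simp only [Sat]
      rw [Term.eval_congr (t := t) (v := v) (w := w)
          (fun m hm => h m (by simp [allVars, hm]))]
      refine exists_congr fun a => and_congr_right fun _ => ih fun m hm => ?_
      by_cases hmn : m = n
      · subst hmn; simp [upd]
      · rw [upd_ne _ _ hmn, upd_ne _ _ hmn]
        exact h m (by simp [allVars, hm])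
  | ball n t φ ih =>
      intro v w h
      simp only [Sat]
      rw [Term.eval_congr (t := t) (v := v) (w := w)
          (fun m hm => h m (by simp [allVars, hm]))]
      refine forall_congr' fun a => imp_congr_right fun _ => ih fun m hm => ?_
      by_cases hmn : m = n
      · subst hmn; simp [upd]
      · rw [upd_ne _ _ hmn, upd_ne _ _ hmn]
        exact h m (by simp [allVars, hm])

/-- Capture-avoiding simultaneous variable renaming: bound variables are renamed to
fresh indices above `floor`. -/
def substF (floor : ℕ) : (ℕ → ℕ) → Formula → Formula
  | ρ, .eq s t => .eq (s.rename ρ) (t.rename ρ)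
  | ρ, .lt s t => .lt (s.rename ρ) (t.rename ρ)
  | ρ, .not φ => .not (substF floor ρ φ)
  | ρ, .or φ ψ => .or (substF floor ρ φ) (substF floor ρ ψ)
  | ρ, .ex n φ =>
      .ex (max floor (φ.allVars.sup ρ) + 1)
        (substF floor (fun m => if m = n then max floor (φ.allVars.sup ρ) + 1 else ρ m) φ)
  | ρ, .all n φ =>
      .all (max floor (φ.allVars.sup ρ) + 1)
        (substF floor (fun m => if m = n then max floor (φ.allVars.sup ρ) + 1 else ρ m) φ)
  | ρ, .bex n t φ =>
      .bex (max floor (φ.allVars.sup ρ) + 1) (t.rename ρ)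
        (substF floor (fun m => if m = n then max floor (φ.allVars.sup ρ) + 1 else ρ m) φ)
  | ρ, .ball n t φ =>
      .ball (max floor (φ.allVars.sup ρ) + 1) (t.rename ρ)
        (substF floor (fun m => if m = n then max floor (φ.allVars.sup ρ) + 1 else ρ m) φ)

lemma sat_substF : ∀ (φ : Formula) (floor : ℕ) (ρ : ℕ → ℕ) (v w : ℕ → M),
    (∀ m ∈ φ.allVars, w m = v (ρ m)) → (Sat v (substF floor ρ φ) ↔ Sat w φ) := by
  intro φ
  induction φ with
  | eq s t =>
      intro floor ρ v w h
      simp only [substF, Sat, Term.eval_rename]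
      rw [Term.eval_congr (t := s) (v := fun n => v (ρ n)) (w := w)
          (fun m hm => (h m (by simp [allVars, hm])).symm),
          Term.eval_congr (t := t) (v := fun n => v (ρ n)) (w := w)
          (fun m hm => (h m (by simp [allVars, hm])).symm)]
  | lt s t =>
      intro floor ρ v w h
      simp only [substF, Sat, Term.eval_rename]
      rw [Term.eval_congr (t := s) (v := fun n => v (ρ n)) (w := w)
          (fun m hm => (h m (by simp [allVars, hm])).symm),
          Term.eval_congr (t := t) (v := fun n => v (ρ n)) (w := w)
          (fun m hm => (h m (by simp [allVars, hm])).symm)]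
  | not φ ih =>
      intro floor ρ v w h
      simp only [substF, Sat]
      rw [ih floor ρ v w h]
  | or φ ψ ihφ ihψ =>
      intro floor ρ v w h
      simp only [substF, Sat]
      rw [ihφ floor ρ v w (fun m hm => h m (by simp [allVars, hm])),
          ihψ floor ρ v w (fun m hm => h m (by simp [allVars, hm]))]
  | ex n φ ih =>
      intro floor ρ v w h
      simp only [substF, Sat]
      refine exists_congr fun a => ih floor _ _ _ fun m hm => ?_
      by_cases hmn : m = n
      · subst hmn; simp [upd]
      · simp only [hmn, if_false]
        rw [upd_ne _ _ hmn, upd_ne _ _ (by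
          intro hc
          have : ρ m ≤ max floor (φ.allVars.sup ρ) :=
            le_max_of_le_right (Finset.le_sup hm)
          omega)]
        exact h m (by simp [allVars, hm])
  | all n φ ih =>
      intro floor ρ v w h
      simp only [substF, Sat]
      refine forall_congr' fun a => ih floor _ _ _ fun m hm => ?_
      by_cases hmn : m = n
      · subst hmn; simp [upd]
      · simp only [hmn, if_false]
        rw [upd_ne _ _ hmn, upd_ne _ _ (by
          intro hc
          have : ρ m ≤ max floor (φ.allVars.sup ρ) :=
            le_max_of_le_right (Finset.le_sup hm)
          omega)]
        exact h m (by simp [allVars, hm])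
  | bex n t φ ih =>
      intro floor ρ v w h
      simp only [substF, Sat, Term.eval_rename]
      rw [Term.eval_congr (t := t) (v := fun n => v (ρ n)) (w := w)
          (fun m hm => (h m (by simp [allVars, hm])).symm)]
      refine exists_congr fun a => and_congr_right fun _ => ih floor _ _ _ fun m hm => ?_
      by_cases hmn : m = n
      · subst hmn; simp [upd]
      · simp only [hmn, if_false]
        rw [upd_ne _ _ hmn, upd_ne _ _ (by
          intro hc
          have : ρ m ≤ max floor (φ.allVars.sup ρ) :=
            le_max_of_le_right (Finset.le_sup hm)
          omega)]
        exact h m (by simp [allVars, hm])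
  | ball n t φ ih =>
      intro floor ρ v w h
      simp only [substF, Sat, Term.eval_rename]
      rw [Term.eval_congr (t := t) (v := fun n => v (ρ n)) (w := w)
          (fun m hm => (h m (by simp [allVars, hm])).symm)]
      refine forall_congr' fun a => imp_congr_right fun _ => ih floor _ _ _ fun m hm => ?_
      by_cases hmn : m = n
      · subst hmn; simp [upd]
      · simp only [hmn, if_false]
        rw [upd_ne _ _ hmn, upd_ne _ _ (by
          intro hc
          have : ρ m ≤ max floor (φ.allVars.sup ρ) :=
            le_max_of_le_right (Finset.le_sup hm)
          omega)]
        exact h m (by simp [allVars, hm])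

end Formula

lemma substF_delta0 {φ : Formula} (h : IsDelta0 φ) :
    ∀ (floor : ℕ) (ρ : ℕ → ℕ), IsDelta0 (Formula.substF floor ρ φ) := by
  induction h with
  | eq s t => exact fun floor ρ => .eq _ _
  | lt s t => exact fun floor ρ => .lt _ _
  | not _ ih => exact fun floor ρ => .not (ih floor ρ)
  | or _ _ ih1 ih2 => exact fun floor ρ => .or (ih1 floor ρ) (ih2 floor ρ)
  | bex n t _ ih => exact fun floor ρ => .bex _ _ (ih floor _)
  | ball n t _ ih => exact fun floor ρ => .ball _ _ (ih floor _)

lemma substF_sigma1 {φ : Formula} (h : IsSigma1 φ) :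
    ∀ (floor : ℕ) (ρ : ℕ → ℕ), IsSigma1 (Formula.substF floor ρ φ) := by
  induction h with
  | delta0 h => exact fun floor ρ => .delta0 (substF_delta0 h floor ρ)
  | ex n _ ih => exact fun floor ρ => .ex _ (ih floor _)

/-- All quantifier (binder) indices of a formula exceed `K`. -/
def AllBindersGt (K : ℕ) : Formula → Prop
  | .eq _ _ => True
  | .lt _ _ => True
  | .not φ => AllBindersGt K φ
  | .or φ ψ => AllBindersGt K φ ∧ AllBindersGt K ψ
  | .ex n φ => K < n ∧ AllBindersGt K φ
  | .all n φ => K < n ∧ AllBindersGt K φ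
  | .bex n _ φ => K < n ∧ AllBindersGt K φ
  | .ball n _ φ => K < n ∧ AllBindersGt K φ

lemma substF_bindersGt (φ : Formula) (floor : ℕ) (ρ : ℕ → ℕ) :
    AllBindersGt floor (Formula.substF floor ρ φ) := by
  induction φ generalizing ρ with
  | eq s t => trivial
  | lt s t => trivial
  | not φ ih => exact ih ρ
  | or φ ψ ihφ ihψ => exact ⟨ihφ ρ, ihψ ρ⟩
  | ex n φ ih => exact ⟨by omega, ih _⟩
  | all n φ ih => exact ⟨by omega, ih _⟩
  | bex n t φ ih => exact ⟨by omega, ih _⟩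
  | ball n t φ ih => exact ⟨by omega, ih _⟩


/-! ### Layer 2: semantically Σ₁/Δ₀ predicates and closure properties -/

section Preds

variable {M : Type} [CommSemiring M] [LinearOrder M] [IsStrictOrderedRing M]

/-- `P` is (semantically) `Δ₀`-definable. -/
def Del (P : (ℕ → M) → Prop) : Prop :=
  ∃ φ : Formula, IsDelta0 φ ∧ ∀ v : ℕ → M, Formula.Sat v φ ↔ P v

/-- `P` is (semantically) `Σ₁`-definable. -/
def Sig (P : (ℕ → M) → Prop) : Prop :=
  ∃ φ : Formula, IsSigma1 φ ∧ ∀ v : ℕ → M, Formula.Sat v φ ↔ P v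

variable {P Q : (ℕ → M) → Prop}

lemma Del.sig (h : Del P) : Sig P := by
  obtain ⟨φ, h1, h2⟩ := h; exact ⟨φ, .delta0 h1, h2⟩

lemma del_congr (h : ∀ v, P v ↔ Q v) (hP : Del P) : Del Q := by
  obtain ⟨φ, h1, h2⟩ := hP; exact ⟨φ, h1, fun v => (h2 v).trans (h v)⟩

lemma sig_congr (h : ∀ v, P v ↔ Q v) (hP : Sig P) : Sig Q := by
  obtain ⟨φ, h1, h2⟩ := hP; exact ⟨φ, h1, fun v => (h2 v).trans (h v)⟩

lemma del_eq (s t : Term) : Del (fun v : ℕ → M => s.eval v = t.eval v) :=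
  ⟨.eq s t, .eq s t, fun _ => Iff.rfl⟩

lemma del_lt (s t : Term) : Del (fun v : ℕ → M => s.eval v < t.eval v) :=
  ⟨.lt s t, .lt s t, fun _ => Iff.rfl⟩

lemma Del.not (hP : Del P) : Del (fun v => ¬ P v) := by
  obtain ⟨φ, h1, h2⟩ := hP
  exact ⟨.not φ, .not h1, fun v => by simp only [Formula.Sat, h2]⟩

lemma Del.and (hP : Del P) (hQ : Del Q) : Del (fun v => P v ∧ Q v) := by
  obtain ⟨φ, h1, h2⟩ := hP; obtain ⟨ψ, g1, g2⟩ := hQ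
  refine ⟨.not (.or (.not φ) (.not ψ)), .not (.or (.not h1) (.not g1)), fun v => ?_⟩
  simp only [Formula.Sat, h2, g2]; tauto

lemma Del.or (hP : Del P) (hQ : Del Q) : Del (fun v => P v ∨ Q v) := by
  obtain ⟨φ, h1, h2⟩ := hP; obtain ⟨ψ, g1, g2⟩ := hQ
  exact ⟨.or φ ψ, .or h1 g1, fun v => by simp only [Formula.Sat, h2, g2]⟩

lemma Del.imp (hP : Del P) (hQ : Del Q) : Del (fun v => P v → Q v) := by
  refine del_congr (fun v => ?_) (hP.not.or hQ); tauto

lemma Del.ball (n : ℕ) (t : Term) (hP : Del P) :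
    Del (fun v => ∀ b < t.eval v, P (upd v n b)) := by
  obtain ⟨φ, h1, h2⟩ := hP
  exact ⟨.ball n t φ, .ball n t h1, fun v => by
    simp only [Formula.Sat, h2]⟩

lemma Del.bex (n : ℕ) (t : Term) (hP : Del P) :
    Del (fun v => ∃ b, b < t.eval v ∧ P (upd v n b)) := by
  obtain ⟨φ, h1, h2⟩ := hP
  exact ⟨.bex n t φ, .bex n t h1, fun v => by
    simp only [Formula.Sat, h2]⟩

lemma Del.subst (ρ : ℕ → ℕ) (hP : Del P) : Del (fun v => P (fun k => v (ρ k))) := by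
  obtain ⟨φ, h1, h2⟩ := hP
  refine ⟨Formula.substF 0 ρ φ, substF_delta0 h1 0 ρ, fun v => ?_⟩
  rw [Formula.sat_substF φ 0 ρ v (fun k => v (ρ k)) (fun m _ => rfl), h2]

lemma Sig.subst (ρ : ℕ → ℕ) (hP : Sig P) : Sig (fun v => P (fun k => v (ρ k))) := by
  obtain ⟨φ, h1, h2⟩ := hP
  refine ⟨Formula.substF 0 ρ φ, substF_sigma1 h1 0 ρ, fun v => ?_⟩
  rw [Formula.sat_substF φ 0 ρ v (fun k => v (ρ k)) (fun m _ => rfl), h2]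

lemma Sig.ex (n : ℕ) (hP : Sig P) : Sig (fun v => ∃ b, P (upd v n b)) := by
  obtain ⟨φ, h1, h2⟩ := hP
  exact ⟨.ex n φ, .ex n h1, fun v => by
    simp only [Formula.Sat]; exact exists_congr fun b => h2 _⟩

private lemma sig_and_aux : ∀ {φ : Formula}, IsSigma1 φ →
    ∀ (K : ℕ), AllBindersGt K φ → ∀ (ψ : Formula), IsDelta0 ψ →
      (∀ m ∈ ψ.allVars, m ≤ K) →
      ∃ χ : Formula, IsSigma1 χ ∧
        ∀ v : ℕ → M, Formula.Sat v χ ↔ (Formula.Sat v φ ∧ Formula.Sat v ψ) := by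
  intro φ hφ
  induction hφ with
  | @delta0 φ h =>
      intro K _ ψ hψ _
      refine ⟨.not (.or (.not φ) (.not ψ)), .delta0 (.not (.or (.not h) (.not hψ))),
        fun v => ?_⟩
      simp only [Formula.Sat]; tauto
  | @ex n φ' _ ih =>
      intro K hb ψ hψ hv
      obtain ⟨hKn, hb'⟩ := hb
      obtain ⟨χ', h1, h2⟩ := ih K hb' ψ hψ hv
      refine ⟨.ex n χ', .ex n h1, fun v => ?_⟩
      have hdrop : ∀ b : M, Formula.Sat (upd v n b) ψ ↔ Formula.Sat v ψ := fun b =>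
        Formula.sat_congr fun m hm => upd_ne _ _ (by
          have := hv m hm; omega)
      simp only [Formula.Sat, h2]
      constructor
      · rintro ⟨b, hb1, hb2⟩
        exact ⟨⟨b, hb1⟩, (hdrop b).mp hb2⟩
      · rintro ⟨⟨b, hb1⟩, hb2⟩
        exact ⟨b, hb1, (hdrop b).mpr hb2⟩

private lemma sig_and_del_formula {φ ψ : Formula} (hφ : IsSigma1 φ) (hψ : IsDelta0 ψ) :
    ∃ χ : Formula, IsSigma1 χ ∧
      ∀ v : ℕ → M, Formula.Sat v χ ↔ (Formula.Sat v φ ∧ Formula.Sat v ψ) := by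
  set K := ψ.allVars.sup id with hK
  obtain ⟨χ, h1, h2⟩ := sig_and_aux (M := M) (substF_sigma1 hφ K id) K
    (substF_bindersGt φ K id) ψ hψ (fun m hm => Finset.le_sup (f := id) hm)
  refine ⟨χ, h1, fun v => ?_⟩
  rw [h2, Formula.sat_substF φ K id v v (fun _ _ => rfl)]

private lemma sig_and_formula : ∀ {ψ : Formula}, IsSigma1 ψ →
    ∀ (K : ℕ), AllBindersGt K ψ → ∀ (φ : Formula), IsSigma1 φ →
      (∀ m ∈ φ.allVars, m ≤ K) →
      ∃ χ : Formula, IsSigma1 χ ∧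
        ∀ v : ℕ → M, Formula.Sat v χ ↔ (Formula.Sat v φ ∧ Formula.Sat v ψ) := by
  intro ψ hψ
  induction hψ with
  | @delta0 ψ h =>
      intro K _ φ hφ _
      exact sig_and_del_formula hφ h
  | @ex n ψ' _ ih =>
      intro K hb φ hφ hv
      obtain ⟨hKn, hb'⟩ := hb
      obtain ⟨χ', h1, h2⟩ := ih K hb' φ hφ hv
      refine ⟨.ex n χ', .ex n h1, fun v => ?_⟩
      have hdrop : ∀ b : M, Formula.Sat (upd v n b) φ ↔ Formula.Sat v φ := fun b =>
        Formula.sat_congr fun m hm => upd_ne _ _ (by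
          have := hv m hm; omega)
      simp only [Formula.Sat, h2]
      constructor
      · rintro ⟨b, hb1, hb2⟩
        exact ⟨(hdrop b).mp hb1, b, hb2⟩
      · rintro ⟨hb1, b, hb2⟩
        exact ⟨b, (hdrop b).mpr hb1, hb2⟩

lemma Sig.and (hP : Sig P) (hQ : Sig Q) : Sig (fun v => P v ∧ Q v) := by
  obtain ⟨φ, h1, h2⟩ := hP; obtain ⟨ψ, g1, g2⟩ := hQ
  set K := φ.allVars.sup id with hK
  obtain ⟨χ, c1, c2⟩ := sig_and_formula (M := M) (substF_sigma1 g1 K id) K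
    (substF_bindersGt ψ K id) φ h1 (fun m hm => Finset.le_sup (f := id) hm)
  refine ⟨χ, c1, fun v => ?_⟩
  rw [c2, Formula.sat_substF ψ K id v v (fun _ _ => rfl), h2, g2]

private lemma sig_or_aux : ∀ {φ : Formula}, IsSigma1 φ →
    ∀ (K : ℕ), AllBindersGt K φ → ∀ (ψ : Formula), IsDelta0 ψ →
      (∀ m ∈ ψ.allVars, m ≤ K) →
      ∃ χ : Formula, IsSigma1 χ ∧
        ∀ v : ℕ → M, Formula.Sat v χ ↔ (Formula.Sat v φ ∨ Formula.Sat v ψ) := by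
  intro φ hφ
  induction hφ with
  | @delta0 φ h =>
      intro K _ ψ hψ _
      exact ⟨.or φ ψ, .delta0 (.or h hψ), fun v => by simp only [Formula.Sat]⟩
  | @ex n φ' _ ih =>
      intro K hb ψ hψ hv
      obtain ⟨hKn, hb'⟩ := hb
      obtain ⟨χ', h1, h2⟩ := ih K hb' ψ hψ hv
      refine ⟨.ex n χ', .ex n h1, fun v => ?_⟩
      have hdrop : ∀ b : M, Formula.Sat (upd v n b) ψ ↔ Formula.Sat v ψ := fun b =>
        Formula.sat_congr fun m hm => upd_ne _ _ (by
          have := hv m hm; omega)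
      simp only [Formula.Sat, h2]
      constructor
      · rintro ⟨b, hb1 | hb2⟩
        · exact Or.inl ⟨b, hb1⟩
        · exact Or.inr ((hdrop b).mp hb2)
      · rintro (⟨b, hb1⟩ | hb2)
        · exact ⟨b, Or.inl hb1⟩
        · exact ⟨0, Or.inr ((hdrop 0).mpr hb2)⟩

private lemma sig_or_del_formula {φ ψ : Formula} (hφ : IsSigma1 φ) (hψ : IsDelta0 ψ) :
    ∃ χ : Formula, IsSigma1 χ ∧
      ∀ v : ℕ → M, Formula.Sat v χ ↔ (Formula.Sat v φ ∨ Formula.Sat v ψ) := by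
  set K := ψ.allVars.sup id with hK
  obtain ⟨χ, h1, h2⟩ := sig_or_aux (M := M) (substF_sigma1 hφ K id) K
    (substF_bindersGt φ K id) ψ hψ (fun m hm => Finset.le_sup (f := id) hm)
  refine ⟨χ, h1, fun v => ?_⟩
  rw [h2, Formula.sat_substF φ K id v v (fun _ _ => rfl)]

private lemma sig_or_formula : ∀ {ψ : Formula}, IsSigma1 ψ →
    ∀ (K : ℕ), AllBindersGt K ψ → ∀ (φ : Formula), IsSigma1 φ →
      (∀ m ∈ φ.allVars, m ≤ K) →
      ∃ χ : Formula, IsSigma1 χ ∧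
        ∀ v : ℕ → M, Formula.Sat v χ ↔ (Formula.Sat v φ ∨ Formula.Sat v ψ) := by
  intro ψ hψ
  induction hψ with
  | @delta0 ψ h =>
      intro K _ φ hφ _
      exact sig_or_del_formula hφ h
  | @ex n ψ' _ ih =>
      intro K hb φ hφ hv
      obtain ⟨hKn, hb'⟩ := hb
      obtain ⟨χ', h1, h2⟩ := ih K hb' φ hφ hv
      refine ⟨.ex n χ', .ex n h1, fun v => ?_⟩
      have hdrop : ∀ b : M, Formula.Sat (upd v n b) φ ↔ Formula.Sat v φ := fun b =>
        Formula.sat_congr fun m hm => upd_ne _ _ (by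
          have := hv m hm; omega)
      simp only [Formula.Sat, h2]
      constructor
      · rintro ⟨b, hb1 | hb2⟩
        · exact Or.inl ((hdrop b).mp hb1)
        · exact Or.inr ⟨b, hb2⟩
      · rintro (hb1 | ⟨b, hb2⟩)
        · exact ⟨0, Or.inl ((hdrop 0).mpr hb1)⟩
        · exact ⟨b, Or.inr hb2⟩

lemma Sig.or (hP : Sig P) (hQ : Sig Q) : Sig (fun v => P v ∨ Q v) := by
  obtain ⟨φ, h1, h2⟩ := hP; obtain ⟨ψ, g1, g2⟩ := hQ
  set K := φ.allVars.sup id with hK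
  obtain ⟨χ, c1, c2⟩ := sig_or_formula (M := M) (substF_sigma1 g1 K id) K
    (substF_bindersGt ψ K id) φ h1 (fun m hm => Finset.le_sup (f := id) hm)
  refine ⟨χ, c1, fun v => ?_⟩
  rw [c2, Formula.sat_substF ψ K id v v (fun _ _ => rfl), h2, g2]

end Preds


/-! ### Layer 2b: truncation, collection, bounded universal quantification -/

section Trunc

/-- Truncate the existential prefix of a `Σ₁` formula by the variable `W`. -/
def truncF (W : ℕ) : Formula → Formula
  | .ex n φ => .bex n (.var W) (truncF W φ)
  | .eq s t => .eq s t
  | .lt s t => .lt s t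
  | .not φ => .not φ
  | .or φ ψ => .or φ ψ
  | .all n φ => .all n φ
  | .bex n t φ => .bex n t φ
  | .ball n t φ => .ball n t φ

lemma truncF_of_delta0 {φ : Formula} (h : IsDelta0 φ) (W : ℕ) : truncF W φ = φ := by
  cases h <;> rfl

lemma truncF_delta0 {φ : Formula} (h : IsSigma1 φ) (W : ℕ) : IsDelta0 (truncF W φ) := by
  induction h with
  | delta0 h => rw [truncF_of_delta0 h]; exact h
  | ex n _ ih => exact .bex _ _ ih

lemma allVars_truncF (W : ℕ) : ∀ φ : Formula,
    (truncF W φ).allVars ⊆ insert W φ.allVars := by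
  intro φ
  induction φ with
  | ex n φ ih =>
      intro m hm
      have he : (truncF W (.ex n φ)).allVars = insert n ({W} ∪ (truncF W φ).allVars) := rfl
      rw [he, Finset.mem_insert, Finset.mem_union, Finset.mem_singleton] at hm
      show m ∈ insert W (insert n φ.allVars)
      rw [Finset.mem_insert, Finset.mem_insert]
      rcases hm with rfl | hm
      · right; left; rfl
      · rcases hm with rfl | hm
        · left; rfl
        · have := ih hm
          rw [Finset.mem_insert] at this
          tauto
  | eq s t => exact fun m hm => Finset.mem_insert_of_mem hm
  | lt s t => exact fun m hm => Finset.mem_insert_of_mem hm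
  | not φ ih => exact fun m hm => Finset.mem_insert_of_mem hm
  | or φ ψ _ _ => exact fun m hm => Finset.mem_insert_of_mem hm
  | all n φ _ => exact fun m hm => Finset.mem_insert_of_mem hm
  | bex n t φ _ => exact fun m hm => Finset.mem_insert_of_mem hm
  | ball n t φ _ => exact fun m hm => Finset.mem_insert_of_mem hm

variable {M : Type} [CommSemiring M] [LinearOrder M] [IsStrictOrderedRing M]

lemma trunc_sound {φ : Formula} (h : IsSigma1 φ) (W : ℕ) :
    ∀ v : ℕ → M, Formula.Sat v (truncF W φ) → Formula.Sat v φ := by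
  induction h with
  | delta0 h => intro v; rw [truncF_of_delta0 h]; exact id
  | ex n _ ih =>
      intro v hv
      obtain ⟨a, _, ha⟩ := hv
      exact ⟨a, ih _ ha⟩

lemma trunc_mono {φ : Formula} (h : IsSigma1 φ) {W : ℕ} (hW : W ∉ φ.allVars) :
    ∀ (v : ℕ → M) (w w' : M), w ≤ w' →
      Formula.Sat (upd v W w) (truncF W φ) → Formula.Sat (upd v W w') (truncF W φ) := by
  induction h with
  | delta0 h =>
      intro v w w' _ hs
      rw [truncF_of_delta0 h] at hs ⊢
      refine (Formula.sat_congr fun m hm => ?_).mp hs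
      have : m ≠ W := fun hc => hW (hc ▸ hm)
      rw [upd_ne _ _ this, upd_ne _ _ this]
  | @ex n φ' _ ih =>
      intro v w w' hww hs
      have hWn : W ≠ n := by
        intro hc; exact hW (by simp [Formula.allVars, hc])
      have hW' : W ∉ φ'.allVars := fun hc => hW (by simp [Formula.allVars, hc])
      obtain ⟨a, ha1, ha2⟩ := hs
      refine ⟨a, ?_, ?_⟩
      · simp only [Term.eval, upd_same] at ha1 ⊢
        exact lt_of_lt_of_le ha1 hww
      · rw [upd_comm _ _ _ hWn] at ha2 ⊢
        exact ih hW' _ _ _ hww ha2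

lemma trunc_complete {φ : Formula} (h : IsSigma1 φ) {W : ℕ} (hW : W ∉ φ.allVars)
    (hpos : ∀ x : M, 0 ≤ x) :
    ∀ v : ℕ → M, Formula.Sat v φ → ∃ w : M, Formula.Sat (upd v W w) (truncF W φ) := by
  induction h with
  | delta0 h =>
      intro v hs
      refine ⟨0, ?_⟩
      rw [truncF_of_delta0 h]
      refine (Formula.sat_congr fun m hm => ?_).mp hs
      have : m ≠ W := fun hc => hW (hc ▸ hm)
      rw [upd_ne _ _ this]
  | @ex n φ' h' ih =>
      intro v hs
      have hWn : W ≠ n := by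
        intro hc; exact hW (by simp [Formula.allVars, hc])
      have hW' : W ∉ φ'.allVars := fun hc => hW (by simp [Formula.allVars, hc])
      obtain ⟨a, ha⟩ := hs
      obtain ⟨w, hw⟩ := ih hW' (upd v n a) ha
      refine ⟨a + 1 + w, a, ?_, ?_⟩
      · simp only [Term.eval, upd_same]
        calc a < a + 1 := lt_add_of_pos_right a zero_lt_one
        _ ≤ a + 1 + w := le_add_of_nonneg_right (hpos w)
      · rw [upd_comm _ _ _ hWn]
        exact trunc_mono h' hW' _ _ _ (le_add_of_nonneg_left (by
          have := hpos (a + 1); positivity)) hw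

end Trunc

section Collect

variable {M : Type} [CommSemiring M] [LinearOrder M] [IsStrictOrderedRing M]

lemma le_of_lt_add_one (hM : ModelsISigma1 M) {a b : M} (h : a < b + 1) : a ≤ b := by
  have := hM.1.2 a (b + 1) h
  exact le_of_add_le_add_right this

lemma lt_add_one_iff (hM : ModelsISigma1 M) {a b : M} : a < b + 1 ↔ a ≤ b :=
  ⟨le_of_lt_add_one hM, fun h => lt_of_le_of_lt h (lt_add_of_pos_right b zero_lt_one)⟩

lemma eq_of_lt_one (hM : ModelsISigma1 M) {a : M} (h : a < 1) : a = 0 := by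
  have h1 : a < 0 + 1 := by rwa [zero_add]
  exact le_antisymm (le_of_lt_add_one hM h1) (hM.1.1 a)

/-- The `Σ₁`-collection lemma, proved from `Σ₁`-induction via truncation. -/
lemma collect (hM : ModelsISigma1 M) {φ : Formula} (hφ : IsSigma1 φ)
    {x W : ℕ} (hxW : x ≠ W) (hWφ : W ∉ φ.allVars)
    (u : M) (v : ℕ → M)
    (hyp : ∀ b : M, b < u → Formula.Sat (upd v x b) φ) :
    ∃ w : M, ∀ b : M, b < u → Formula.Sat (upd (upd v x b) W w) (truncF W φ) := by
  classical
  set S : ℕ := max (max x W) (φ.allVars.sup id) with hS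
  set U : ℕ := S + 1 with hU
  set R : ℕ := S + 2 with hR
  have hWS : W ≤ S := le_max_of_le_left (le_max_right _ _)
  have hxS : x ≤ S := le_max_of_le_left (le_max_left _ _)
  have hvS : ∀ m ∈ φ.allVars, m ≤ S := fun m hm =>
    le_max_of_le_right (Finset.le_sup (f := id) hm)
  set body : Formula := .or (.not (.lt (.var x) (.var R))) (truncF W φ) with hbody
  set Φ : Formula := .ex W (.ball x (.var U) body) with hΦ
  have hΦ1 : IsSigma1 Φ := .ex W (.delta0 (.ball x (.var U)
    (.or (.not (.lt (.var x) (.var R))) (truncF_delta0 hφ W))))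
  set v₁ : ℕ → M := upd v U u with hv₁
  -- characterization of Sat (upd v₁ R r) Φ
  have key : ∀ r : M, Formula.Sat (upd v₁ R r) Φ ↔
      ∃ w : M, ∀ b : M, b < u → (¬ (b < r) ∨
        Formula.Sat (upd (upd v x b) W w) (truncF W φ)) := by
    intro r
    simp only [hΦ, Formula.Sat, Term.eval]
    refine exists_congr fun w => ?_
    have hUval : upd (upd v₁ R r) W w U = u := by
      rw [upd_ne _ _ (by omega), upd_ne _ _ (by omega), hv₁, upd_same]
    rw [hUval]
    refine forall_congr' fun b => imp_congr_right fun _ => ?_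
    have hRval : upd (upd (upd v₁ R r) W w) x b R = r := by
      rw [upd_ne _ _ (by omega), upd_ne _ _ (by omega), upd_same]
    have hxval : upd (upd (upd v₁ R r) W w) x b x = b := upd_same _ _ _
    simp only [hbody, Formula.Sat, Term.eval]
    rw [hRval, hxval]
    refine or_congr Iff.rfl (Formula.sat_congr fun m hm => ?_)
    have hm' := allVars_truncF W φ hm
    simp only [Finset.mem_insert] at hm'
    rcases hm' with hmW | hmφ
    · rw [hmW]
      have h1 : W ≠ x := Ne.symm hxW
      simp [upd, h1]
    · have hmS : m ≤ S := hvS m hmφ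
      have hmW : m ≠ W := fun hc => hWφ (hc ▸ hmφ)
      have h1 : m ≠ R := by omega
      have h2 : m ≠ U := by omega
      by_cases hmx : m = x
      · subst hmx
        simp [upd, hxW]
      · simp [upd, hv₁, hmx, hmW, h1, h2]
  -- induction along r
  have hind := hM.2 Φ hΦ1 R v₁
  have hbase : Formula.Sat (upd v₁ R 0) Φ := by
    rw [key]
    exact ⟨0, fun b _ => Or.inl (fun hb => absurd (hM.1.1 b) (not_le_of_gt hb))⟩
  have hstep : ∀ r : M, Formula.Sat (upd v₁ R r) Φ → Formula.Sat (upd v₁ R (r + 1)) Φ := by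
    intro r hr
    rw [key] at hr ⊢
    obtain ⟨w, hw⟩ := hr
    by_cases hru : r < u
    · obtain ⟨w₂, hw₂⟩ := trunc_complete hφ hWφ hM.1.1 (upd v x r) (hyp r hru)
      refine ⟨w + w₂, fun b hb => ?_⟩
      rcases hw b hb with h | h
      · -- ¬ b < r ; if also b < r + 1 then b = r
        by_cases hbr1 : b < r + 1
        · have hbr : b = r := le_antisymm (le_of_lt_add_one hM hbr1) (not_lt.mp h)
          subst hbr
          exact Or.inr (trunc_mono hφ hWφ _ _ _ (le_add_of_nonneg_left (hM.1.1 w)) hw₂)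
        · exact Or.inl hbr1
      · exact Or.inr (trunc_mono hφ hWφ _ _ _ (le_add_of_nonneg_right (hM.1.1 w₂)) h)
    · refine ⟨w, fun b hb => ?_⟩
      rcases hw b hb with h | h
      · exact absurd (lt_of_lt_of_le hb (not_lt.mp hru)) h
      · exact Or.inr h
  have hall := hind hbase hstep u
  rw [key] at hall
  obtain ⟨w, hw⟩ := hall
  exact ⟨w, fun b hb => (hw b hb).resolve_left (by simpa using hb)⟩

variable {P Q : (ℕ → M) → Prop}

lemma Sig.ball (hM : ModelsISigma1 M) (n : ℕ) (t : Term) (hnt : n ∉ t.vars)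
    (hP : Sig P) : Sig (fun v => ∀ b < t.eval v, P (upd v n b)) := by
  classical
  obtain ⟨φ, hφ, hs⟩ := hP
  set W : ℕ := (insert n (t.vars ∪ φ.allVars)).sup id + 1 with hW
  have hWn : W ≠ n := by
    have : n ≤ (insert n (t.vars ∪ φ.allVars)).sup id :=
      Finset.le_sup (f := id) (Finset.mem_insert_self n _)
    omega
  have hWt : W ∉ t.vars := fun hc => by
    have : W ≤ (insert n (t.vars ∪ φ.allVars)).sup id :=
      Finset.le_sup (f := id) (Finset.mem_insert_of_mem (Finset.mem_union_left _ hc))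
    omega
  have hWφ : W ∉ φ.allVars := fun hc => by
    have : W ≤ (insert n (t.vars ∪ φ.allVars)).sup id :=
      Finset.le_sup (f := id) (Finset.mem_insert_of_mem (Finset.mem_union_right _ hc))
    omega
  refine ⟨.ex W (.ball n t (truncF W φ)),
    .ex W (.delta0 (.ball n t (truncF_delta0 hφ W))), fun v => ?_⟩
  have hteval : ∀ w : M, t.eval (upd v W w) = t.eval v := fun w =>
    Term.eval_congr fun m hm => upd_ne _ _ (fun hc => hWt (hc ▸ hm))
  simp only [Formula.Sat]
  constructor
  · rintro ⟨w, hw⟩ b hb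
    have hb' : b < t.eval (upd v W w) := by rw [hteval]; exact hb
    have := hw b hb'
    rw [upd_comm _ _ _ hWn] at this
    have := trunc_sound hφ W _ this
    rw [← hs]
    refine (Formula.sat_congr fun m hm => ?_).mp this
    have : m ≠ W := fun hc => hWφ (hc ▸ hm)
    rw [upd_ne _ _ this]
  · intro hyp
    obtain ⟨w, hw⟩ := collect hM hφ (Ne.symm hWn) hWφ (t.eval v) v
      (fun b hb => (hs _).mpr (hyp b hb))
    refine ⟨w, fun b hb => ?_⟩
    rw [hteval] at hb
    rw [upd_comm _ _ _ hWn]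
    exact hw b hb

lemma Sig.bex (n : ℕ) (t : Term) (hnt : n ∉ t.vars) (hP : Sig P) :
    Sig (fun v => ∃ b, b < t.eval v ∧ P (upd v n b)) := by
  have h1 : Sig (fun v : ℕ → M => P v ∧ v n < t.eval v) :=
    hP.and (del_lt (.var n) t).sig
  have h2 := h1.ex n
  refine sig_congr (fun v => ?_) h2
  simp only [upd_same]
  refine exists_congr fun b => ?_
  have : t.eval (upd v n b) = t.eval v :=
    Term.eval_congr fun m hm => upd_ne _ _ (fun hc => hnt (hc ▸ hm))
  rw [this]; tauto

lemma sig_ind (hM : ModelsISigma1 M) (h : Sig P) (n : ℕ) (v : ℕ → M)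
    (h0 : P (upd v n 0)) (hs : ∀ x, P (upd v n x) → P (upd v n (x + 1))) :
    ∀ x, P (upd v n x) := by
  obtain ⟨φ, h1, h2⟩ := h
  intro x
  exact (h2 _).mp (hM.2 φ h1 n v ((h2 _).mpr h0)
    (fun y hy => (h2 _).mpr (hs y ((h2 _).mp hy))) x)

/-- Least number principle for predicates with `Σ₁` complement. -/
lemma sig_lnp (hM : ModelsISigma1 M) {P Pn : (ℕ → M) → Prop}
    (hPn : Sig Pn) (hcompl : ∀ v, Pn v ↔ ¬ P v) (n : ℕ) (v : ℕ → M) (x₀ : M)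
    (hx₀ : P (upd v n x₀)) :
    ∃ x : M, P (upd v n x) ∧ ∀ y, y < x → ¬ P (upd v n y) := by
  classical
  by_contra hcon
  push_neg at hcon
  -- hcon : ∀ x, P (upd v n x) → ∃ y < x, P (upd v n y)
  obtain ⟨φn, hφn1, hφn2⟩ := hPn
  set m : ℕ := max n (φn.allVars.sup id) + 1 with hm
  have hmn : m ≠ n := by omega
  have hmφ : m ∉ φn.allVars := fun hc => by
    have : m ≤ φn.allVars.sup id := Finset.le_sup (f := id) hc
    omega
  set ρ : ℕ → ℕ := fun k => if k = n then m else k with hρ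
  set φn' : Formula := Formula.substF 0 ρ φn with hφn'
  have hsat' : ∀ (u : ℕ → M) (b : M), Formula.Sat (upd u m b) φn' ↔ Pn (upd u n b) := by
    intro u b
    rw [Formula.sat_substF φn 0 ρ (upd u m b) (upd u n b) ?_, hφn2]
    intro k hk
    by_cases hkn : k = n
    · subst hkn; simp only [hρ, if_pos rfl, upd_same]
    · have hkm : k ≠ m := fun hc => hmφ (hc ▸ hk)
      rw [upd_ne _ _ hkn, hρ]
      simp only [hkn, if_false]
      rw [upd_ne _ _ hkm]
  set R : (ℕ → M) → Prop := fun u => ∀ b < (Term.add (.var n) .one).eval u,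
    (fun w => Formula.Sat w φn') (upd u m b) with hRdef
  have hR : Sig R := Sig.ball hM m (.add (.var n) .one)
    (by
      intro hc
      have : m = n := by
        simpa [Term.vars] using hc
      omega) ⟨φn', substF_sigma1 hφn1 0 ρ, fun _ => Iff.rfl⟩
  have hRsem : ∀ (x : M), R (upd v n x) ↔ ∀ b : M, b < x + 1 → Pn (upd v n b) := by
    intro x
    simp only [hRdef, Term.eval, upd_same]
    refine forall_congr' fun b => imp_congr_right fun _ => ?_
    rw [hsat' (upd v n x) b, upd_idem]
  have h0 : R (upd v n 0) := by
    rw [hRsem]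
    intro b hb
    have : b = 0 := by
      rw [zero_add] at hb
      exact eq_of_lt_one hM hb
    subst this
    rw [hcompl]
    intro hP0
    obtain ⟨y, hy, _⟩ := hcon 0 hP0
    exact absurd (hM.1.1 y) (not_le_of_gt hy)
  have hstep : ∀ x, R (upd v n x) → R (upd v n (x + 1)) := by
    intro x hx
    rw [hRsem] at hx ⊢
    intro b hb
    rcases lt_or_eq_of_le (le_of_lt_add_one hM hb) with hb' | hb'
    · exact hx b hb'
    · subst hb'
      rw [hcompl]
      intro hPb
      obtain ⟨y, hy, hPy⟩ := hcon _ hPb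
      have := hx y hy
      rw [hcompl] at this
      exact this hPy
  have hall := sig_ind hM hR n v h0 hstep x₀
  rw [hRsem] at hall
  have := hall x₀ (lt_add_of_pos_right x₀ zero_lt_one)
  rw [hcompl] at this
  exact this hx₀

end Collect


/-! ### Layer 4a: arithmetic in models of IΣ₁ -/

section Arith

variable {M : Type} [CommSemiring M] [LinearOrder M] [IsStrictOrderedRing M]

/-- Relocation of a binary canonical predicate. -/
lemma sig_of2 {Φ : M → M → Prop} (h : Sig (fun v => Φ (v 0) (v 1))) (k0 k1 : ℕ) :
    Sig (fun v => Φ (v k0) (v k1)) := by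
  refine sig_congr (fun v => ?_) (h.subst (fun k => if k = 0 then k0 else k1))
  simp

lemma sig_of1 {Φ : M → Prop} (h : Sig (fun v => Φ (v 0))) (k0 : ℕ) :
    Sig (fun v => Φ (v k0)) := by
  refine sig_congr (fun v => ?_) (h.subst (fun _ => k0))
  simp

lemma sig_of3 {Φ : M → M → M → Prop} (h : Sig (fun v => Φ (v 0) (v 1) (v 2)))
    (k0 k1 k2 : ℕ) : Sig (fun v => Φ (v k0) (v k1) (v k2)) := by
  refine sig_congr (fun v => ?_)
    (h.subst (fun k => if k = 0 then k0 else if k = 1 then k1 else k2))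
  simp

variable (hM : ModelsISigma1 M)
include hM

lemma sub_of_le {x y : M} (h : x ≤ y) : ∃ z : M, x + z = y := by
  have hdel : Del (fun v : ℕ → M => v 1 < v 0 ∨ v 0 + v 2 = v 1) := by
    refine del_congr (fun v => ?_)
      ((del_lt (.var 1) (.var 0)).or (del_eq (.add (.var 0) (.var 2)) (.var 1)))
    simp [Term.eval]
  have hSig : Sig (fun v : ℕ → M => ∃ b, v 1 < v 0 ∨ v 0 + b = v 1) := by
    refine sig_congr (fun v => ?_) (hdel.sig.ex 2)
    refine exists_congr fun b => ?_
    simp [upd]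
  set v : ℕ → M := fun k => if k = 0 then x else 0 with hv
  have hbase : (fun v : ℕ → M => ∃ b, v 1 < v 0 ∨ v 0 + b = v 1) (upd v 1 0) := by
    simp only [upd, hv]
    rcases (hM.1.1 x).eq_or_lt with h0 | h0
    · exact ⟨0, Or.inr (by simp [← h0])⟩
    · exact ⟨0, Or.inl (by simpa using h0)⟩
  have hstep : ∀ z, (fun v : ℕ → M => ∃ b, v 1 < v 0 ∨ v 0 + b = v 1) (upd v 1 z) →
      (fun v : ℕ → M => ∃ b, v 1 < v 0 ∨ v 0 + b = v 1) (upd v 1 (z + 1)) := by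
    intro z hz
    simp only [upd, hv] at hz ⊢
    norm_num at hz ⊢
    obtain ⟨b, hb⟩ := hz
    rcases hb with hb | hb
    · rcases lt_or_ge (z + 1) x with h1 | h1
      · exact ⟨0, Or.inl h1⟩
      · have : x = z + 1 := le_antisymm h1 (hM.1.2 z x hb)
        exact ⟨0, Or.inr (by simp [this])⟩
    · exact ⟨b + 1, Or.inr (by rw [← add_assoc, hb])⟩
  have := sig_ind hM hSig 1 v hbase hstep y
  simp only [upd, hv] at this
  norm_num at this
  obtain ⟨b, hb⟩ := this
  rcases hb with hb | hb
  · exact absurd h (not_le_of_gt hb)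
  · exact ⟨b, hb⟩

lemma pred_of_pos {x : M} (h : 0 < x) : ∃ y : M, x = y + 1 := by
  obtain ⟨z, hz⟩ := sub_of_le hM (show (1 : M) ≤ x from by
    have := hM.1.2 0 x h; simpa using this)
  exact ⟨z, by rw [← hz, add_comm]⟩

lemma div_exists (a : M) {b : M} (hb : 0 < b) : ∃ q r : M, r < b ∧ a = q * b + r := by
  have hdel : Del (fun v : ℕ → M => v 3 < v 1 ∧ v 0 = v 2 * v 1 + v 3) := by
    refine del_congr (fun v => ?_)
      ((del_lt (.var 3) (.var 1)).and (del_eq (.var 0) (.add (.mul (.var 2) (.var 1)) (.var 3))))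
    simp [Term.eval]
  have hSig : Sig (fun v : ℕ → M => ∃ q r, r < v 1 ∧ v 0 = q * v 1 + r) := by
    refine sig_congr (fun v => ?_) ((hdel.sig.ex 3).ex 2)
    refine exists_congr fun q => ?_
    constructor
    · rintro ⟨r, hr⟩; exact ⟨r, by simpa [upd] using hr⟩
    · rintro ⟨r, hr⟩; exact ⟨r, by simpa [upd] using hr⟩
  set v : ℕ → M := fun k => if k = 1 then b else 0 with hv
  have hbase : (fun v : ℕ → M => ∃ q r, r < v 1 ∧ v 0 = q * v 1 + r) (upd v 0 0) := by
    refine ⟨0, 0, ?_, by simp⟩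
    simpa [upd, hv] using hb
  have hstep : ∀ z, (fun v : ℕ → M => ∃ q r, r < v 1 ∧ v 0 = q * v 1 + r) (upd v 0 z) →
      (fun v : ℕ → M => ∃ q r, r < v 1 ∧ v 0 = q * v 1 + r) (upd v 0 (z + 1)) := by
    intro z hz
    simp only [upd, hv] at hz ⊢
    norm_num at hz ⊢
    obtain ⟨q, r, hr, hzq⟩ := hz
    rcases lt_or_ge (r + 1) b with h1 | h1
    · exact ⟨q, r + 1, h1, by rw [hzq, add_assoc]⟩
    · have hrb : r + 1 = b := le_antisymm (hM.1.2 r b hr) h1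
      refine ⟨q + 1, 0, hb, ?_⟩
      rw [hzq, add_assoc, hrb, add_zero, add_one_mul]
  have := sig_ind hM hSig 0 v hbase hstep a
  simpa [upd, hv] using this

lemma div_unique {b q r q' r' : M} (hr : r < b) (hr' : r' < b)
    (h : q * b + r = q' * b + r') : q = q' ∧ r = r' := by
  have key : ∀ u u' s s' : M, s < b → s' < b → u * b + s = u' * b + s' → u ≤ u' →
      u = u' ∧ s = s' := by
    intro u u' s s' hs hs' hss huu
    obtain ⟨z, hz⟩ := sub_of_le hM huu
    rcases (hM.1.1 z).eq_or_lt with h0 | h0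
    · have hz' : u = u' := by rw [← hz, ← h0, add_zero]
      refine ⟨hz', ?_⟩
      rw [hz'] at hss
      exact add_left_cancel hss
    · exfalso
      have hz' : u' * b = u * b + z * b := by rw [← hz, add_mul]
      rw [hz', add_assoc] at hss
      have hs2 : s = z * b + s' := add_left_cancel hss
      have : b ≤ z * b := by
        obtain ⟨w, hw⟩ := pred_of_pos hM h0
        rw [hw, add_mul, one_mul]
        exact le_add_of_nonneg_left (hM.1.1 _)
      have : b ≤ s := hs2 ▸ le_add_of_le_of_nonneg this (hM.1.1 s')
      exact absurd hs (not_lt_of_ge this)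
  rcases le_total q q' with hqq | hqq
  · exact key q q' r r' hr hr' h hqq
  · have := key q' q r' r hr' hr h.symm hqq
    exact ⟨this.1.symm, this.2.symm⟩

lemma mul_right_le_cancel {a b c : M} (hc : 0 < c) (h : a * c ≤ b * c) : a ≤ b := by
  by_contra hab
  push_neg at hab
  exact absurd h (not_le_of_gt (mul_lt_mul_of_pos_right hab hc))

lemma mul_right_cancel' {a b c : M} (hc : 0 < c) (h : a * c = b * c) : a = b :=
  le_antisymm (mul_right_le_cancel hM hc h.le) (mul_right_le_cancel hM hc h.ge)

end Arith

section Exp2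

variable {M : Type} [CommSemiring M] [LinearOrder M] [IsStrictOrderedRing M]
variable (hM : ModelsISigma1 M) (C : AckCoding M)

lemma sig_exp : Sig (fun v : ℕ → M => C.exp2 (v 0) = v 1) := by
  obtain ⟨φ₀, h1, h2⟩ := C.exp2_sigma1
  refine ⟨Formula.substF 0 (fun k => if k = 0 then 0 else 1) φ₀,
    substF_sigma1 h1 0 _, fun v => ?_⟩
  rw [Formula.sat_substF φ₀ 0 _ v (fun m => if m = 0 then v 0 else v 1) ?_]
  · exact (h2 (v 0) (v 1)).symm
  · intro m hm; by_cases hm0 : m = 0 <;> simp [hm0]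

lemma sig_expk (kx ky : ℕ) : Sig (fun v : ℕ → M => C.exp2 (v kx) = v ky) :=
  sig_of2 (Φ := fun a b => C.exp2 a = b) (sig_exp C) kx ky

include hM

lemma exp2_pos : ∀ x : M, 0 < C.exp2 x := by
  have hSig : Sig (fun v : ℕ → M => ∃ u, C.exp2 (v 0) = u ∧ 0 < u) := by
    refine sig_congr (fun v => ?_)
      (Sig.ex 1 ((sig_expk C 0 1).and (del_lt .zero (.var 1)).sig))
    refine exists_congr fun u => ?_
    simp [upd, Term.eval]
  intro x
  set v : ℕ → M := fun _ => 0 with hv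
  have hbase : (fun v : ℕ → M => ∃ u, C.exp2 (v 0) = u ∧ 0 < u) (upd v 0 0) := by
    refine ⟨1, ?_, zero_lt_one⟩
    simp only [upd_same]
    exact C.exp2_zero
  have hstep : ∀ z, (fun v : ℕ → M => ∃ u, C.exp2 (v 0) = u ∧ 0 < u) (upd v 0 z) →
      (fun v : ℕ → M => ∃ u, C.exp2 (v 0) = u ∧ 0 < u) (upd v 0 (z + 1)) := by
    intro z hz
    simp only [upd_same] at hz ⊢
    obtain ⟨u, hu1, hu2⟩ := hz
    refine ⟨2 * u, ?_, by positivity⟩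
    rw [C.exp2_succ, hu1]
  have := sig_ind hM hSig 0 v hbase hstep x
  simp only [upd_same] at this
  obtain ⟨u, hu1, hu2⟩ := this
  rw [hu1]; exact hu2

lemma one_le_exp2 : ∀ x : M, 1 ≤ C.exp2 x := fun x => by
  have := hM.1.2 0 _ (exp2_pos hM C x); simpa using this

lemma lt_exp2_self : ∀ x : M, x < C.exp2 x := by
  have hSig : Sig (fun v : ℕ → M => ∃ u, C.exp2 (v 0) = u ∧ v 0 < u) := by
    refine sig_congr (fun v => ?_)
      (Sig.ex 1 ((sig_expk C 0 1).and (del_lt (.var 0) (.var 1)).sig))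
    refine exists_congr fun u => ?_
    simp [upd, Term.eval]
  intro x
  set v : ℕ → M := fun _ => 0 with hv
  have hbase : (fun v : ℕ → M => ∃ u, C.exp2 (v 0) = u ∧ v 0 < u) (upd v 0 0) := by
    exact ⟨1, by simp only [upd_same]; exact C.exp2_zero, by simp [upd]⟩
  have hstep : ∀ z, (fun v : ℕ → M => ∃ u, C.exp2 (v 0) = u ∧ v 0 < u) (upd v 0 z) →
      (fun v : ℕ → M => ∃ u, C.exp2 (v 0) = u ∧ v 0 < u) (upd v 0 (z + 1)) := by
    intro z hz
    simp only [upd_same] at hz ⊢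
    obtain ⟨u, hu1, hu2⟩ := hz
    have hupos : 0 < u := lt_of_le_of_lt (hM.1.1 z) hu2
    refine ⟨2 * u, by rw [C.exp2_succ, hu1], ?_⟩
    calc z + 1 ≤ u := hM.1.2 z u hu2
    _ < u + u := lt_add_of_pos_left u hupos
    _ = 2 * u := (two_mul u).symm
  have := sig_ind hM hSig 0 v hbase hstep x
  simp only [upd_same] at this
  obtain ⟨u, hu1, hu2⟩ := this
  rw [hu1]; exact hu2

lemma exp2_add : ∀ x y : M, C.exp2 (x + y) = C.exp2 x * C.exp2 y := by
  have hP1 : Del (fun v : ℕ → M => v 5 = v 0 + v 1 ∧ v 4 = v 2 * v 3) := by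
    refine del_congr (fun v => ?_)
      ((del_eq (.var 5) (.add (.var 0) (.var 1))).and
        (del_eq (.var 4) (.mul (.var 2) (.var 3))))
    simp [Term.eval]
  have hSig : Sig (fun v : ℕ → M => ∃ u1 u2 u3 s,
      C.exp2 (v 0) = u1 ∧ (C.exp2 (v 1) = u2 ∧ (C.exp2 s = u3 ∧
        (s = v 0 + v 1 ∧ u3 = u1 * u2)))) := by
    have h0 := (sig_expk C 0 2).and ((sig_expk C 1 3).and ((sig_expk C 5 4).and hP1.sig))
    have hc := Sig.ex 2 (Sig.ex 3 (Sig.ex 4 (Sig.ex 5 h0)))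
    refine sig_congr (fun v => ?_) hc
    simp [upd]
  intro x y
  set v : ℕ → M := fun k => if k = 0 then x else 0 with hv
  have hbase : (fun v : ℕ → M => ∃ u1 u2 u3 s,
      C.exp2 (v 0) = u1 ∧ (C.exp2 (v 1) = u2 ∧ (C.exp2 s = u3 ∧
        (s = v 0 + v 1 ∧ u3 = u1 * u2)))) (upd v 1 0) := by
    show ∃ u1 u2 u3 s, C.exp2 x = u1 ∧ (C.exp2 (0 : M) = u2 ∧ (C.exp2 s = u3 ∧
      (s = x + 0 ∧ u3 = u1 * u2)))
    exact ⟨C.exp2 x, 1, C.exp2 x, x, rfl, C.exp2_zero, rfl, (add_zero x).symm,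
      (mul_one _).symm⟩
  have hstep : ∀ z, (fun v : ℕ → M => ∃ u1 u2 u3 s,
      C.exp2 (v 0) = u1 ∧ (C.exp2 (v 1) = u2 ∧ (C.exp2 s = u3 ∧
        (s = v 0 + v 1 ∧ u3 = u1 * u2)))) (upd v 1 z) →
      (fun v : ℕ → M => ∃ u1 u2 u3 s,
      C.exp2 (v 0) = u1 ∧ (C.exp2 (v 1) = u2 ∧ (C.exp2 s = u3 ∧
        (s = v 0 + v 1 ∧ u3 = u1 * u2)))) (upd v 1 (z + 1)) := by
    intro z hz
    have hz' : ∃ u1 u2 u3 s, C.exp2 x = u1 ∧ (C.exp2 z = u2 ∧ (C.exp2 s = u3 ∧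
      (s = x + z ∧ u3 = u1 * u2))) := hz
    show ∃ u1 u2 u3 s, C.exp2 x = u1 ∧ (C.exp2 (z + 1) = u2 ∧ (C.exp2 s = u3 ∧
      (s = x + (z + 1) ∧ u3 = u1 * u2)))
    obtain ⟨u1, u2, u3, s, h1, h2, h3, h4, h5⟩ := hz'
    exact ⟨u1, 2 * u2, 2 * u3, s + 1, h1, by rw [C.exp2_succ, h2],
      by rw [C.exp2_succ, h3], by rw [h4, add_assoc], by rw [h5]; ring⟩
  have hAll := sig_ind hM hSig 1 v hbase hstep y
  have h' : ∃ u1 u2 u3 s, C.exp2 x = u1 ∧ (C.exp2 y = u2 ∧ (C.exp2 s = u3 ∧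
    (s = x + y ∧ u3 = u1 * u2))) := hAll
  obtain ⟨u1, u2, u3, s, h1, h2, h3, h4, h5⟩ := h'
  rw [h4] at h3
  rw [h3, h1, h2]
  exact h5

lemma exp2_mono {x y : M} (h : x < y) : C.exp2 x < C.exp2 y := by
  obtain ⟨z, hz⟩ := sub_of_le hM (hM.1.2 x y h)
  have : C.exp2 y = 2 * C.exp2 x * C.exp2 z := by
    rw [← hz, exp2_add hM C, ← C.exp2_succ]
  rw [this]
  calc C.exp2 x < C.exp2 x + C.exp2 x := lt_add_of_pos_left _ (exp2_pos hM C x)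
  _ = 2 * C.exp2 x := (two_mul _).symm
  _ = 2 * C.exp2 x * 1 := (mul_one _).symm
  _ ≤ 2 * C.exp2 x * C.exp2 z := by
      refine mul_le_mul_of_nonneg_left (one_le_exp2 hM C z) (hM.1.1 _)

lemma exp2_le_mono {x y : M} (h : x ≤ y) : C.exp2 x ≤ C.exp2 y := by
  rcases h.eq_or_lt with rfl | h
  · exact le_rfl
  · exact (exp2_mono hM C h).le

end Exp2


/-! ### Layer 4b: digit theory for `E`, and pairing -/

section Etheory

variable {M : Type} [CommSemiring M] [LinearOrder M] [IsStrictOrderedRing M]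
variable (hM : ModelsISigma1 M) (C : AckCoding M)
include hM

lemma E_iff_decomp {x a q s : M} (hs : s < C.exp2 (x + 1)) (ha : a = q * C.exp2 (x + 1) + s) :
    C.E x a ↔ C.exp2 x ≤ s := by
  constructor
  · rintro ⟨q', r, hr, ha'⟩
    have hsum : C.exp2 x + r < C.exp2 (x + 1) := by
      rw [C.exp2_succ, two_mul]; exact add_lt_add_right hr _
    have ha'' : a = q' * C.exp2 (x + 1) + (C.exp2 x + r) := by rw [ha', add_assoc]
    have := div_unique hM hs hsum (by rw [← ha, ← ha''])
    rw [this.2]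
    exact le_add_of_nonneg_right (hM.1.1 r)
  · intro hxs
    obtain ⟨r, hrsum⟩ := sub_of_le hM hxs
    have hr : r < C.exp2 x := by
      have h1 : C.exp2 x + r < C.exp2 x + C.exp2 x := by
        rw [hrsum, ← two_mul, ← C.exp2_succ]; exact hs
      exact lt_of_add_lt_add_left h1
    exact ⟨q, r, hr, by rw [ha, ← hrsum, add_assoc]⟩

lemma exists_decomp (a x : M) : ∃ q s : M, s < C.exp2 (x + 1) ∧ a = q * C.exp2 (x + 1) + s :=
  div_exists hM a (exp2_pos hM C _)

omit hM in
lemma E_le {x a : M} (hM : ModelsISigma1 M) (h : C.E x a) : C.exp2 x ≤ a := by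
  obtain ⟨q, r, hr, ha⟩ := h
  rw [ha]
  calc C.exp2 x ≤ q * C.exp2 (x + 1) + C.exp2 x := le_add_of_nonneg_left (hM.1.1 _)
  _ ≤ q * C.exp2 (x + 1) + C.exp2 x + r := le_add_of_nonneg_right (hM.1.1 r)

lemma not_E_of_lt {x a : M} (h : a < C.exp2 x) : ¬ C.E x a := fun hE =>
  absurd (E_le C hM hE) (not_le_of_gt h)

lemma not_E_zero (x : M) : ¬ C.E x 0 :=
  not_E_of_lt hM C (exp2_pos hM C x)

lemma E_add_mul {x a : M} (k : M) : C.E x (a + k * C.exp2 (x + 1)) ↔ C.E x a := by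
  obtain ⟨q, s, hs, ha⟩ := exists_decomp hM C a x
  have h2 : a + k * C.exp2 (x + 1) = (q + k) * C.exp2 (x + 1) + s := by rw [ha]; ring
  rw [E_iff_decomp hM C hs ha, E_iff_decomp hM C hs h2]

lemma E_add_exp2 {p d : M} (hd : ¬ C.E p d) :
    ∀ x, C.E x (d + C.exp2 p) ↔ (C.E x d ∨ x = p) := by
  intro x
  rcases lt_trichotomy x p with hxp | rfl | hpx
  · obtain ⟨z, hz⟩ := sub_of_le hM (hM.1.2 x p hxp)
    have hep : C.exp2 p = C.exp2 z * C.exp2 (x + 1) := by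
      rw [← hz, exp2_add hM C, mul_comm]
    rw [hep, E_add_mul hM C]
    simp [ne_of_lt hxp]
  · obtain ⟨q, s, hs, hd'⟩ := exists_decomp hM C d x
    have hsp : s < C.exp2 x := by
      by_contra hle
      push_neg at hle
      exact hd ((E_iff_decomp hM C hs hd').mpr hle)
    have h2 : d + C.exp2 x = q * C.exp2 (x + 1) + (s + C.exp2 x) := by rw [hd']; ring
    have hlt : s + C.exp2 x < C.exp2 (x + 1) := by
      rw [C.exp2_succ, two_mul]; exact add_lt_add_left hsp _
    rw [E_iff_decomp hM C hlt h2]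
    constructor
    · intro _; exact Or.inr rfl
    · intro _; exact le_add_of_nonneg_left (hM.1.1 s)
  · obtain ⟨Q, S, hS, hdQ⟩ := exists_decomp hM C d x
    obtain ⟨z, hz⟩ := sub_of_le hM (hM.1.2 p x hpx)
    have hex : C.exp2 x = C.exp2 z * C.exp2 (p + 1) := by
      rw [← hz, exp2_add hM C, mul_comm]
    have hex1 : C.exp2 (x + 1) = (2 * C.exp2 z) * C.exp2 (p + 1) := by
      rw [C.exp2_succ, hex]; ring
    have hSp : ¬ C.E p S := by
      intro hE
      apply hd
      have hd2 : d = S + (Q * (2 * C.exp2 z)) * C.exp2 (p + 1) := by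
        rw [hdQ, hex1]; ring
      rw [hd2]
      exact (E_add_mul hM C _).mpr hE
    obtain ⟨A, s, hs, hSA⟩ := exists_decomp hM C S p
    have hsp : s < C.exp2 p := by
      by_contra hle
      push_neg at hle
      exact hSp ((E_iff_decomp hM C hs hSA).mpr hle)
    have hAbound : ∀ K : M, S < K * C.exp2 (p + 1) → S + C.exp2 p < K * C.exp2 (p + 1) := by
      intro K hK
      have hA_le : A * C.exp2 (p + 1) ≤ S := by
        rw [hSA]; exact le_add_of_nonneg_right (hM.1.1 s)
      have hA_lt : A * C.exp2 (p + 1) < K * C.exp2 (p + 1) := lt_of_le_of_lt hA_le hK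
      have hAK : A < K := by
        by_contra h
        push_neg at h
        exact absurd hA_lt (not_lt_of_ge (mul_le_mul_of_nonneg_right h (hM.1.1 _)))
      have hA1 : A + 1 ≤ K := hM.1.2 _ _ hAK
      calc S + C.exp2 p = A * C.exp2 (p + 1) + (s + C.exp2 p) := by rw [hSA]; ring
      _ < A * C.exp2 (p + 1) + C.exp2 (p + 1) := by
          refine add_lt_add_right ?_ _
          rw [C.exp2_succ, two_mul]
          exact add_lt_add_left hsp _
      _ = (A + 1) * C.exp2 (p + 1) := by ring
      _ ≤ K * C.exp2 (p + 1) := mul_le_mul_of_nonneg_right hA1 (hM.1.1 _)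
    have hS' : S + C.exp2 p < C.exp2 (x + 1) := by
      rw [hex1]
      exact hAbound _ (by rw [← hex1]; exact hS)
    have h2 : d + C.exp2 p = Q * C.exp2 (x + 1) + (S + C.exp2 p) := by rw [hdQ]; ring
    rw [E_iff_decomp hM C hS' h2, E_iff_decomp hM C hS hdQ]
    have hiff : (C.exp2 x ≤ S + C.exp2 p) ↔ C.exp2 x ≤ S := by
      constructor
      · intro hle
        by_contra hlt
        push_neg at hlt
        have : S + C.exp2 p < C.exp2 x := by
          rw [hex]
          exact hAbound _ (by rw [← hex]; exact hlt)
        exact absurd hle (not_le_of_gt this)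
      · intro h
        exact h.trans (le_add_of_nonneg_right (hM.1.1 _))
    rw [hiff]
    simp [ne_of_gt hpx]

lemma two_mul_cancel {y y' : M} (h : 2 * y = 2 * y') : y = y' := by
  rcases lt_trichotomy y y' with hlt | heq | hlt
  · exact absurd h (ne_of_lt (mul_lt_mul_of_pos_left hlt two_pos))
  · exact heq
  · exact absurd h (ne_of_gt (mul_lt_mul_of_pos_left hlt two_pos))

omit hM in
lemma le_pair_right (x y : M) (hM : ModelsISigma1 M) : y ≤ C.pair x y := by
  have h2 := C.pair_spec x y
  by_contra h
  push_neg at h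
  have : 2 * C.pair x y < 2 * y := mul_lt_mul_of_pos_left h two_pos
  rw [h2] at this
  exact absurd this (not_lt_of_ge (le_add_of_nonneg_left (hM.1.1 _)))

lemma le_pair_left (x y : M) : x ≤ C.pair x y := by
  have h2 := C.pair_spec x y
  rcases (hM.1.1 (x + y)).eq_or_lt with h0 | h0
  · have hx0 : x = 0 := by
      by_contra hx
      have : 0 < x := (hM.1.1 x).lt_of_ne (Ne.symm hx)
      have : 0 < x + y := lt_of_lt_of_le this (le_add_of_nonneg_right (hM.1.1 y))
      exact absurd h0 (ne_of_lt this)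
    rw [hx0]
    exact hM.1.1 _
  · -- 0 < x + y
    have h1 : (1 : M) ≤ x + y := by have := hM.1.2 0 (x + y) h0; simpa using this
    have hs : x + y ≤ (x + y) * (x + y) := by
      calc x + y = (x + y) * 1 := (mul_one _).symm
      _ ≤ (x + y) * (x + y) := mul_le_mul_of_nonneg_left h1 (hM.1.1 _)
    have : 2 * x ≤ 2 * C.pair x y := by
      rw [h2]
      calc 2 * x = x + x := two_mul x
      _ ≤ (x + y) + (x + y) := add_le_add (le_add_of_nonneg_right (hM.1.1 y))
          (le_add_of_nonneg_right (hM.1.1 y))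
      _ ≤ (x + y) * (x + y) + (x + y) := add_le_add_left hs _
      _ = (x + y) * (x + y + 1) := by ring
      _ ≤ (x + y) * (x + y + 1) + 2 * y := le_add_of_nonneg_right (by
          have := hM.1.1 y; positivity)
    by_contra h
    push_neg at h
    exact absurd this (not_le_of_gt (mul_lt_mul_of_pos_left h two_pos))

lemma pair_inj {x y x' y' : M} (h : C.pair x y = C.pair x' y') : x = x' ∧ y = y' := by
  have h2 := C.pair_spec x y
  have h2' := C.pair_spec x' y'
  have heq : (x + y) * (x + y + 1) + 2 * y = (x' + y') * (x' + y' + 1) + 2 * y' := by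
    rw [← h2, ← h2', h]
  have key : ∀ u u' w w' : M, w ≤ u → w' ≤ u' →
      u * (u + 1) + 2 * w = u' * (u' + 1) + 2 * w' → u < u' → False := by
    intro u u' w w' hw hw' hh huu
    have c1 : u * (u + 1) + 2 * w ≤ u * (u + 1) + 2 * u :=
      add_le_add_right (mul_le_mul_of_nonneg_left hw (by positivity)) _
    have c2 : u * (u + 1) + 2 * u < (u + 1) * (u + 2) := by
      have e1 : u * (u + 1) + 2 * u = u * u + 3 * u := by ring
      have e2 : (u + 1) * (u + 2) = u * u + 3 * u + 2 := by ring
      rw [e1, e2]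
      exact lt_add_of_pos_right _ two_pos
    have hu1 : u + 1 ≤ u' := hM.1.2 _ _ huu
    have c3 : (u + 1) * (u + 2) ≤ u' * (u' + 1) := by
      refine mul_le_mul hu1 ?_ ?_ ?_
      · calc u + 2 = (u + 1) + 1 := by ring
        _ ≤ u' + 1 := add_le_add_left hu1 1
      · have := hM.1.1 u; positivity
      · have h0 := hM.1.1 u'
        calc (0 : M) ≤ u' := h0
        _ ≤ u' := le_rfl
    have c4 : u' * (u' + 1) ≤ u' * (u' + 1) + 2 * w' := le_add_of_nonneg_right (by
      have := hM.1.1 w'; positivity)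
    have : u * (u + 1) + 2 * w < u' * (u' + 1) + 2 * w' :=
      lt_of_le_of_lt c1 (lt_of_lt_of_le c2 (le_trans c3 c4))
    rw [hh] at this
    exact lt_irrefl _ this
  have hyx : y ≤ x + y := le_add_of_nonneg_left (hM.1.1 x)
  have hyx' : y' ≤ x' + y' := le_add_of_nonneg_left (hM.1.1 x')
  have hss : x + y = x' + y' := by
    rcases lt_trichotomy (x + y) (x' + y') with hlt | heq' | hlt
    · exact absurd (key _ _ _ _ hyx hyx' heq hlt) (fun h => h)
    · exact heq'
    · exact absurd (key _ _ _ _ hyx' hyx heq.symm hlt) (fun h => h)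
  rw [hss] at heq
  have hy : y = y' := two_mul_cancel hM (add_left_cancel heq)
  refine ⟨?_, hy⟩
  rw [hy] at hss
  exact add_right_cancel hss

end Etheory


/-! ### Layer 5: Σ₁ atoms for `E`, `pair`, `proj` -/

section Atoms

variable {M : Type} [CommSemiring M] [LinearOrder M] [IsStrictOrderedRing M]

lemma del_of2 {Φ : M → M → Prop} (h : Del (fun v => Φ (v 0) (v 1))) (k0 k1 : ℕ) :
    Del (fun v => Φ (v k0) (v k1)) := by
  refine del_congr (fun v => ?_) (h.subst (fun k => if k = 0 then k0 else k1))
  simp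

lemma del_of3 {Φ : M → M → M → Prop} (h : Del (fun v => Φ (v 0) (v 1) (v 2)))
    (k0 k1 k2 : ℕ) : Del (fun v => Φ (v k0) (v k1) (v k2)) := by
  refine del_congr (fun v => ?_)
    (h.subst (fun k => if k = 0 then k0 else if k = 1 then k1 else k2))
  simp

variable (hM : ModelsISigma1 M) (C : AckCoding M)
include hM

lemma E_arg_lt {x a : M} (h : C.E x a) : x < a :=
  lt_of_lt_of_le (lt_exp2_self hM C x) (E_le C hM h)

lemma sigE : Sig (fun v : ℕ → M => C.E (v 0) (v 1)) := by
  have hD : Del (fun v : ℕ → M => v 6 < v 2 ∧ v 1 = v 5 * v 4 + v 2 + v 6) := by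
    refine del_congr (fun v => ?_) ((del_lt (.var 6) (.var 2)).and
      (del_eq (.var 1) (.add (.add (.mul (.var 5) (.var 4)) (.var 2)) (.var 6))))
    simp [Term.eval]
  have hD2 : Del (fun v : ℕ → M => v 3 = v 0 + 1) := by
    refine del_congr (fun v => ?_) (del_eq (.var 3) (.add (.var 0) .one))
    simp [Term.eval]
  have chain := Sig.ex 2 (Sig.ex 3 (Sig.ex 4 (Sig.ex 5 (Sig.ex 6
    ((sig_expk C 0 2).and (hD2.sig.and ((sig_expk C 3 4).and hD.sig)))))))
  have h : Sig (fun v : ℕ → M => ∃ u1 s u2 q r, C.exp2 (v 0) = u1 ∧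
      (s = v 0 + 1 ∧ (C.exp2 s = u2 ∧ (r < u1 ∧ v 1 = q * u2 + u1 + r)))) := chain
  refine sig_congr (fun v => ?_) h
  constructor
  · rintro ⟨u1, s, u2, q, r, h1, h2, h3, h4, h5⟩
    subst h2
    exact ⟨q, r, by rw [h1]; exact h4, by rw [h5, ← h3, ← h1]⟩
  · rintro ⟨q, r, h4, h5⟩
    exact ⟨C.exp2 (v 0), v 0 + 1, C.exp2 (v 0 + 1), q, r, rfl, rfl, rfl, h4, h5⟩

lemma sigNE : Sig (fun v : ℕ → M => ¬ C.E (v 0) (v 1)) := by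
  have hD : Del (fun v : ℕ → M => ¬ v 1 = v 5 * v 4 + v 2 + v 6) := by
    refine del_congr (fun v => ?_) (Del.not
      (del_eq (.var 1) (.add (.add (.mul (.var 5) (.var 4)) (.var 2)) (.var 6))))
    simp [Term.eval]
  have hD2 : Del (fun v : ℕ → M => v 3 = v 0 + 1) := by
    refine del_congr (fun v => ?_) (del_eq (.var 3) (.add (.var 0) .one))
    simp [Term.eval]
  have hball : Del (fun v : ℕ → M =>
      ∀ q < v 1 + 1, ∀ r < (upd v 5 q) 2, ¬ (upd (upd v 5 q) 6 r) 1 =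
        (upd (upd v 5 q) 6 r) 5 * (upd (upd v 5 q) 6 r) 4 + (upd (upd v 5 q) 6 r) 2 +
          (upd (upd v 5 q) 6 r) 6) := by
    have h1 := Del.ball (M := M) 6 (.var 2) hD
    have h2 := Del.ball (M := M) 5 (.add (.var 1) .one) h1
    exact del_congr (fun v => Iff.rfl) h2
  have hball' : Del (fun v : ℕ → M =>
      ∀ q < v 1 + 1, ∀ r < v 2, ¬ v 1 = q * v 4 + v 2 + r) := hball
  have chain := Sig.ex 2 (Sig.ex 3 (Sig.ex 4
    ((sig_expk C 0 2).and (hD2.sig.and ((sig_expk C 3 4).and hball'.sig)))))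
  have h : Sig (fun v : ℕ → M => ∃ u1 s u2, C.exp2 (v 0) = u1 ∧
      (s = v 0 + 1 ∧ (C.exp2 s = u2 ∧
        ∀ q < v 1 + 1, ∀ r < u1, ¬ v 1 = q * u2 + u1 + r))) := chain
  refine sig_congr (fun v => ?_) h
  constructor
  · rintro ⟨u1, s, u2, h1, h2, h3, h4⟩ hE
    obtain ⟨q, r, hr, ha⟩ := hE
    subst h2
    subst h1
    subst h3
    have hq : q < v 1 + 1 := by
      have h1le : (1 : M) ≤ C.exp2 (v 0 + 1) := one_le_exp2 hM C _
      have hq1 : q ≤ q * C.exp2 (v 0 + 1) := by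
        calc q = q * 1 := (mul_one q).symm
        _ ≤ q * C.exp2 (v 0 + 1) := mul_le_mul_of_nonneg_left h1le (hM.1.1 q)
      have hq2 : q * C.exp2 (v 0 + 1) ≤ v 1 := by
        rw [ha]
        calc q * C.exp2 (v 0 + 1) ≤ q * C.exp2 (v 0 + 1) + C.exp2 (v 0) :=
          le_add_of_nonneg_right (hM.1.1 _)
        _ ≤ q * C.exp2 (v 0 + 1) + C.exp2 (v 0) + r := le_add_of_nonneg_right (hM.1.1 r)
      exact lt_of_le_of_lt (hq1.trans hq2) (lt_add_of_pos_right _ zero_lt_one)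
    exact h4 q hq r hr ha
  · intro hnE
    refine ⟨C.exp2 (v 0), v 0 + 1, C.exp2 (v 0 + 1), rfl, rfl, rfl, ?_⟩
    intro q _ r hr ha
    exact hnE ⟨q, r, hr, ha⟩

lemma sigEk (kx ka : ℕ) : Sig (fun v : ℕ → M => C.E (v kx) (v ka)) :=
  sig_of2 (Φ := fun x y => C.E x y) (sigE hM C) kx ka

lemma sigNEk (kx ka : ℕ) : Sig (fun v : ℕ → M => ¬ C.E (v kx) (v ka)) :=
  sig_of2 (Φ := fun x y => ¬ C.E x y) (sigNE hM C) kx ka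

lemma del_pair : Del (fun v : ℕ → M => C.pair (v 0) (v 1) = v 2) := by
  have h := del_eq (M := M) (.mul (.add .one .one) (.var 2))
    (.add (.mul (.add (.var 0) (.var 1)) (.add (.add (.var 0) (.var 1)) .one))
      (.mul (.add .one .one) (.var 1)))
  refine del_congr (fun v => ?_) h
  show (1 + 1) * v 2 = (v 0 + v 1) * ((v 0 + v 1) + 1) + (1 + 1) * v 1 ↔ _
  rw [one_add_one_eq_two]
  constructor
  · intro hh
    have hs := C.pair_spec (v 0) (v 1)
    exact two_mul_cancel hM (hs.trans hh.symm)
  · intro hh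
    rw [← hh]
    exact C.pair_spec _ _

lemma del_pairk (k0 k1 k2 : ℕ) : Del (fun v : ℕ → M => C.pair (v k0) (v k1) = v k2) :=
  del_of3 (Φ := fun x y z => C.pair x y = z) (del_pair hM C) k0 k1 k2

lemma sigEP : Sig (fun v : ℕ → M => C.E (C.pair (v 0) (v 1)) (v 2)) := by
  have chain := Sig.ex 3 (((del_pairk hM C 0 1 3).sig).and (sigEk hM C 3 2))
  have h : Sig (fun v : ℕ → M => ∃ p, C.pair (v 0) (v 1) = p ∧ C.E p (v 2)) := chain
  refine sig_congr (fun v => ?_) h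
  constructor
  · rintro ⟨p, hp, hE⟩; rw [hp]; exact hE
  · intro hE; exact ⟨_, rfl, hE⟩

lemma sigNEP : Sig (fun v : ℕ → M => ¬ C.E (C.pair (v 0) (v 1)) (v 2)) := by
  have chain := Sig.ex 3 (((del_pairk hM C 0 1 3).sig).and (sigNEk hM C 3 2))
  have h : Sig (fun v : ℕ → M => ∃ p, C.pair (v 0) (v 1) = p ∧ ¬ C.E p (v 2)) := chain
  refine sig_congr (fun v => ?_) h
  constructor
  · rintro ⟨p, hp, hE⟩; rw [hp]; exact hE
  · intro hE; exact ⟨_, rfl, hE⟩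

lemma sigEPk (k0 k1 k2 : ℕ) : Sig (fun v : ℕ → M => C.E (C.pair (v k0) (v k1)) (v k2)) :=
  sig_of3 (Φ := fun x y z => C.E (C.pair x y) z) (sigEP hM C) k0 k1 k2

lemma sigNEPk (k0 k1 k2 : ℕ) :
    Sig (fun v : ℕ → M => ¬ C.E (C.pair (v k0) (v k1)) (v k2)) :=
  sig_of3 (Φ := fun x y z => ¬ C.E (C.pair x y) z) (sigNEP hM C) k0 k1 k2

end Atoms

section ProjAtoms

variable {M : Type} [CommSemiring M] [LinearOrder M] [IsStrictOrderedRing M]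
variable (hM : ModelsISigma1 M) (C : AckCoding M)

/-- The condition under which `proj` returns a genuine value. -/
def UniqueZ (a j : M) : Prop :=
  ∃ z : M, C.E (C.pair j z) a ∧ ∀ z' : M, C.E (C.pair j z') a → z' = z

lemma proj_spec_unique {a j : M} (h : UniqueZ C a j) :
    C.E (C.pair j (C.proj a j)) a ∧
      ∀ z' : M, C.E (C.pair j z') a → z' = C.proj a j := by
  have h' : ∃ z : M, C.E (C.pair j z) a ∧ ∀ z' : M, C.E (C.pair j z') a → z' = z := h
  have heq : C.proj a j = h'.choose := by
    unfold AckCoding.proj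
    rw [dif_pos h']
  rw [heq]
  exact h'.choose_spec

lemma proj_spec_not {a j : M} (h : ¬ UniqueZ C a j) : C.proj a j = 0 := by
  have h' : ¬ ∃ z : M, C.E (C.pair j z) a ∧ ∀ z' : M, C.E (C.pair j z') a → z' = z := h
  unfold AckCoding.proj
  rw [dif_neg h']

include hM

lemma z_lt_of_E {a j z : M} (h : C.E (C.pair j z) a) : z < a :=
  lt_of_le_of_lt (le_pair_right C j z hM) (E_arg_lt hM C h)

lemma proj_le {a j : M} : C.proj a j ≤ a := by
  classical
  by_cases h : UniqueZ C a j
  · exact (z_lt_of_E hM C (proj_spec_unique C h).1).le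
  · rw [proj_spec_not C h]; exact hM.1.1 a

lemma sigU : Sig (fun v : ℕ → M => UniqueZ C (v 0) (v 1)) := by
  have hinner : Sig (fun v : ℕ → M => ¬ C.E (C.pair (v 1) (v 3)) (v 0) ∨ v 3 = v 2) :=
    (sigNEPk hM C 1 3 0).or (del_eq (.var 3) (.var 2)).sig
  have hball := Sig.ball hM 3 (.var 0) (by decide) hinner
  have chain := Sig.ex 2 ((sigEPk hM C 1 2 0).and hball)
  have h : Sig (fun v : ℕ → M => ∃ z, C.E (C.pair (v 1) z) (v 0) ∧
      ∀ b < v 0, (¬ C.E (C.pair (v 1) b) (v 0) ∨ b = z)) := chain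
  refine sig_congr (fun v => ?_) h
  constructor
  · rintro ⟨z, hz, hbd⟩
    refine ⟨z, hz, fun z' hz' => ?_⟩
    rcases hbd z' (z_lt_of_E hM C hz') with h | h
    · exact absurd hz' h
    · exact h
  · rintro ⟨z, hz, huniq⟩
    refine ⟨z, hz, fun b _ => ?_⟩
    by_cases hb : C.E (C.pair (v 1) b) (v 0)
    · exact Or.inr (huniq b hb)
    · exact Or.inl hb

lemma sigNU : Sig (fun v : ℕ → M => ¬ UniqueZ C (v 0) (v 1)) := by
  classical
  have hinner2 : Sig (fun v : ℕ → M => C.E (C.pair (v 1) (v 4)) (v 0) ∧ ¬ v 4 = v 3) :=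
    (sigEPk hM C 1 4 0).and (Del.not (del_eq (.var 4) (.var 3))).sig
  have hbex := Sig.bex 4 (.var 0) (by decide) hinner2
  have hor := (sigNEPk hM C 1 3 0).or hbex
  have hball := Sig.ball hM 3 (.var 0) (by decide) hor
  have h : Sig (fun v : ℕ → M => ∀ z < v 0, (¬ C.E (C.pair (v 1) z) (v 0) ∨
      ∃ z', z' < v 0 ∧ (C.E (C.pair (v 1) z') (v 0) ∧ ¬ z' = z))) := hball
  refine sig_congr (fun v => ?_) h
  constructor
  · rintro hall ⟨z, hz, huniq⟩
    rcases hall z (z_lt_of_E hM C hz) with h | ⟨z', _, hz', hne⟩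
    · exact h hz
    · exact hne (huniq z' hz')
  · intro hnu z _
    by_cases hz : C.E (C.pair (v 1) z) (v 0)
    · right
      by_contra hno
      push_neg at hno
      exact hnu ⟨z, hz, fun z' hz' => hno z' (z_lt_of_E hM C hz') hz'⟩
    · exact Or.inl hz

lemma PR_iff {a j y : M} :
    ((UniqueZ C a j ∧ C.E (C.pair j y) a) ∨ (¬ UniqueZ C a j ∧ y = 0)) ↔
      C.proj a j = y := by
  classical
  constructor
  · rintro (⟨hu, hE⟩ | ⟨hnu, rfl⟩)
    · exact ((proj_spec_unique C hu).2 y hE).symm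
    · exact proj_spec_not C hnu
  · intro h
    by_cases hu : UniqueZ C a j
    · exact Or.inl ⟨hu, h ▸ (proj_spec_unique C hu).1⟩
    · exact Or.inr ⟨hu, h ▸ proj_spec_not C hu⟩

lemma NPR_iff {a j y : M} :
    ((UniqueZ C a j ∧ ¬ C.E (C.pair j y) a) ∨ (¬ UniqueZ C a j ∧ ¬ y = 0)) ↔
      ¬ C.proj a j = y := by
  classical
  constructor
  · rintro (⟨hu, hE⟩ | ⟨hnu, h0⟩) h
    · exact hE (h ▸ (proj_spec_unique C hu).1)
    · exact h0 (by rw [← h, proj_spec_not C hnu])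
  · intro h
    by_cases hu : UniqueZ C a j
    · refine Or.inl ⟨hu, fun hE => h ((proj_spec_unique C hu).2 y hE).symm⟩
    · refine Or.inr ⟨hu, fun h0 => h (by rw [proj_spec_not C hu, h0])⟩

lemma sigProj : Sig (fun v : ℕ → M => C.proj (v 0) (v 1) = v 2) := by
  have h1 := (sigU hM C).and (sigEPk hM C 1 2 0)
  have h2 := (sigNU hM C).and (del_eq (M := M) (.var 2) .zero).sig
  have h2' : Sig (fun v : ℕ → M => ¬ UniqueZ C (v 0) (v 1) ∧ v 2 = 0) := h2
  refine sig_congr (fun v => ?_) (h1.or h2')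
  exact PR_iff hM C

lemma sigNProj : Sig (fun v : ℕ → M => ¬ C.proj (v 0) (v 1) = v 2) := by
  have h1 := (sigU hM C).and (sigNEPk hM C 1 2 0)
  have h2 := (sigNU hM C).and (Del.not (del_eq (M := M) (.var 2) .zero)).sig
  have h2' : Sig (fun v : ℕ → M => ¬ UniqueZ C (v 0) (v 1) ∧ ¬ v 2 = 0) := h2
  refine sig_congr (fun v => ?_) (h1.or h2')
  exact NPR_iff hM C

lemma sigProjk (k0 k1 k2 : ℕ) : Sig (fun v : ℕ → M => C.proj (v k0) (v k1) = v k2) :=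
  sig_of3 (Φ := fun x y z => C.proj x y = z) (sigProj hM C) k0 k1 k2

lemma sigNProjk (k0 k1 k2 : ℕ) : Sig (fun v : ℕ → M => ¬ C.proj (v k0) (v k1) = v k2) :=
  sig_of3 (Φ := fun x y z => ¬ C.proj x y = z) (sigNProj hM C) k0 k1 k2

/-- `j` is the least index attaining its `proj`-value in `a`. -/
def Jp (a j : M) : Prop := ∀ k : M, k < j → C.proj a k ≠ C.proj a j

lemma sigJ : Sig (fun v : ℕ → M => Jp C (v 0) (v 1)) := by
  have hball := Sig.ball hM 3 (.var 1) (by decide) (sigNProjk hM C 0 3 2)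
  have hin := (sigProjk hM C 0 1 2).and hball
  have hbex := Sig.bex 2 (.add (.var 0) .one) (by decide) hin
  have h : Sig (fun v : ℕ → M => ∃ y, y < v 0 + 1 ∧ (C.proj (v 0) (v 1) = y ∧
      ∀ k < v 1, ¬ C.proj (v 0) k = y)) := hbex
  refine sig_congr (fun v => ?_) h
  constructor
  · rintro ⟨y, _, hy, hk⟩ k hkj
    rw [hy]
    exact hk k hkj
  · intro hJ
    refine ⟨C.proj (v 0) (v 1), ?_, rfl, fun k hk => hJ k hk⟩
    exact lt_of_le_of_lt (proj_le hM C) (lt_add_of_pos_right _ zero_lt_one)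

lemma sigNJ : Sig (fun v : ℕ → M => ¬ Jp C (v 0) (v 1)) := by
  classical
  have hin := (sigProjk hM C 0 2 3).and (sigProjk hM C 0 1 3)
  have hbexy := Sig.bex 3 (.add (.var 0) .one) (by decide) hin
  have hbexk := Sig.bex 2 (.var 1) (by decide) hbexy
  have h : Sig (fun v : ℕ → M => ∃ k, k < v 1 ∧ ∃ y, y < v 0 + 1 ∧
      (C.proj (v 0) k = y ∧ C.proj (v 0) (v 1) = y)) := hbexk
  refine sig_congr (fun v => ?_) h
  constructor
  · rintro ⟨k, hk, y, _, h1, h2⟩ hJ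
    exact hJ k hk (h1.trans h2.symm)
  · intro hnJ
    unfold Jp at hnJ
    push_neg at hnJ
    obtain ⟨k, hk, hky⟩ := hnJ
    refine ⟨k, hk, C.proj (v 0) (v 1), ?_, hky, rfl⟩
    exact lt_of_le_of_lt (proj_le hM C) (lt_add_of_pos_right _ zero_lt_one)

end ProjAtoms


/-! ### Layer 6: the counting code -/

section Cnt

variable {M : Type} [CommSemiring M] [LinearOrder M] [IsStrictOrderedRing M]
variable (hM : ModelsISigma1 M) (C : AckCoding M)

/-- `D` codes the counting function of the least-index set of `a` on `[0, n]`. -/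
def CntB (a D n : M) : Prop :=
  (∀ x < D + 1, (¬ C.E x D ∨ ∃ k, k < x + 1 ∧ ∃ z, z < x + 1 ∧
    (¬ n < k ∧ C.pair k z = x))) ∧
  ((∀ k < n + 1, ∃ z, z < D ∧ C.E (C.pair k z) D) ∧
  ((∃ o, o = (0 : M) ∧ C.E (C.pair o o) D) ∧
  ((∀ k < n, ∀ z < D, (¬ C.E (C.pair k z) D ∨ ∃ k1, k1 = k + 1 ∧ ∃ z1, z1 = z + 1 ∧
      ((Jp C a k ∧ C.E (C.pair k1 z1) D) ∨ (¬ Jp C a k ∧ C.E (C.pair k1 z) D)))) ∧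
  (∀ k < D, ∀ z < D, ∀ z' < D, (¬ C.E (C.pair k z) D ∨
    (¬ C.E (C.pair k z') D ∨ z = z'))))))

include hM

lemma sigJk (k0 k1 : ℕ) : Sig (fun v : ℕ → M => Jp C (v k0) (v k1)) :=
  sig_of2 (Φ := fun x y => Jp C x y) (sigJ hM C) k0 k1

lemma sigNJk (k0 k1 : ℕ) : Sig (fun v : ℕ → M => ¬ Jp C (v k0) (v k1)) :=
  sig_of2 (Φ := fun x y => ¬ Jp C x y) (sigNJ hM C) k0 k1

/-- `CntB` is `Σ₁` in `(a, D, n)` (slots 0, 1, 2). -/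
lemma sigCnt : Sig (fun v : ℕ → M => CntB C (v 0) (v 1) (v 2)) := by
  have hT1 : Sig (fun v : ℕ → M => ∀ x < v 1 + 1, (¬ C.E x (v 1) ∨
      ∃ k, k < x + 1 ∧ ∃ z, z < x + 1 ∧ (¬ v 2 < k ∧ C.pair k z = x))) := by
    have hin : Sig (fun v : ℕ → M => ¬ v 2 < v 4 ∧ C.pair (v 4) (v 5) = v 3) :=
      ((Del.not (del_lt (.var 2) (.var 4))).and (del_pairk hM C 4 5 3)).sig
    have hz := Sig.bex 5 (.add (.var 3) .one) (by decide) hin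
    have hk := Sig.bex 4 (.add (.var 3) .one) (by decide) hz
    have hor := (sigNEk hM C 3 1).or hk
    exact Sig.ball hM 3 (.add (.var 1) .one) (by decide) hor
  have hT2 : Sig (fun v : ℕ → M => ∀ k < v 2 + 1, ∃ z, z < v 1 ∧
      C.E (C.pair k z) (v 1)) := by
    have hz := Sig.bex 4 (.var 1) (by decide) (sigEPk hM C 3 4 1)
    exact Sig.ball hM 3 (.add (.var 2) .one) (by decide) hz
  have hT3 : Sig (fun v : ℕ → M => ∃ o, o = (0 : M) ∧ C.E (C.pair o o) (v 1)) := by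
    have h0 : Del (fun v : ℕ → M => v 3 = (0 : M)) := by
      refine del_congr (fun v => ?_) (del_eq (.var 3) .zero)
      simp [Term.eval]
    exact Sig.ex 3 (h0.sig.and (sigEPk hM C 3 3 1))
  have hT4 : Sig (fun v : ℕ → M => ∀ k < v 2, ∀ z < v 1, (¬ C.E (C.pair k z) (v 1) ∨
      ∃ k1, k1 = k + 1 ∧ ∃ z1, z1 = z + 1 ∧
        ((Jp C (v 0) k ∧ C.E (C.pair k1 z1) (v 1)) ∨
          (¬ Jp C (v 0) k ∧ C.E (C.pair k1 z) (v 1))))) := by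
    have hd1 : Del (fun v : ℕ → M => v 5 = v 3 + 1) := by
      refine del_congr (fun v => ?_) (del_eq (.var 5) (.add (.var 3) .one))
      simp [Term.eval]
    have hd2 : Del (fun v : ℕ → M => v 6 = v 4 + 1) := by
      refine del_congr (fun v => ?_) (del_eq (.var 6) (.add (.var 4) .one))
      simp [Term.eval]
    have hcase := ((sigJk hM C 0 3).and (sigEPk hM C 5 6 1)).or
      ((sigNJk hM C 0 3).and (sigEPk hM C 5 4 1))
    have hz1 := Sig.ex 6 (hd2.sig.and hcase)
    have hk1 := Sig.ex 5 (hd1.sig.and hz1)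
    have hor := (sigNEPk hM C 3 4 1).or hk1
    have hz := Sig.ball hM 4 (.var 1) (by decide) hor
    exact Sig.ball hM 3 (.var 2) (by decide) hz
  have hT2u : Sig (fun v : ℕ → M => ∀ k < v 1, ∀ z < v 1, ∀ z' < v 1,
      (¬ C.E (C.pair k z) (v 1) ∨ (¬ C.E (C.pair k z') (v 1) ∨ z = z'))) := by
    have heq : Del (fun v : ℕ → M => v 4 = v 5) := by
      refine del_congr (fun v => ?_) (del_eq (.var 4) (.var 5))
      simp [Term.eval]
    have hor := (sigNEPk hM C 3 4 1).or ((sigNEPk hM C 3 5 1).or heq.sig)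
    have h5 := Sig.ball hM 5 (.var 1) (by decide) hor
    have h4 := Sig.ball hM 4 (.var 1) (by decide) h5
    exact Sig.ball hM 3 (.var 1) (by decide) h4
  exact hT1.and (hT2.and (hT3.and (hT4.and hT2u)))

end Cnt


/-! ### Layer 6b: existence of counting codes -/

section CntExists

variable {M : Type} [CommSemiring M] [LinearOrder M] [IsStrictOrderedRing M]
variable (hM : ModelsISigma1 M) (C : AckCoding M)
include hM

lemma lt_succ_self (x : M) : x < x + 1 := lt_add_of_pos_right x zero_lt_one

lemma zero_lt_succ (x : M) : (0 : M) < x + 1 :=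
  lt_of_le_of_lt (hM.1.1 x) (lt_succ_self hM x)

lemma hbit0 (p : M) : ∀ x, C.E x (C.exp2 p) ↔ x = p := by
  intro x
  have h := E_add_exp2 hM C (not_E_zero hM C p) x
  rw [zero_add] at h
  rw [h]
  simp [not_E_zero hM C x]

lemma cnt_exists (a B : M) : ∃ D : M, CntB C a D B := by
  classical
  have hSig : Sig (fun v : ℕ → M => ∃ D, CntB C (v 0) D (v 2)) :=
    Sig.ex 1 (sigCnt hM C)
  set v : ℕ → M := fun k => if k = 0 then a else 0 with hv
  have hbase : (fun v : ℕ → M => ∃ D, CntB C (v 0) D (v 2)) (upd v 2 0) := by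
    show ∃ D, CntB C a D 0
    set D₀ := C.exp2 (C.pair 0 0) with hD₀
    have hb := hbit0 hM C (C.pair (0 : M) 0)
    refine ⟨D₀, ?_, ?_, ?_, ?_, ?_⟩
    · intro x _
      by_cases hx : C.E x D₀
      · right
        have hx0 : x = C.pair 0 0 := (hb x).mp hx
        exact ⟨0, zero_lt_succ hM x, 0, zero_lt_succ hM x,
          lt_irrefl 0, hx0.symm⟩
      · exact Or.inl hx
    · intro k hk
      have hk0 : k = 0 := le_antisymm (by simpa using le_of_lt_add_one hM hk) (hM.1.1 k)
      subst hk0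
      exact ⟨0, exp2_pos hM C _, (hb _).mpr rfl⟩
    · exact ⟨0, rfl, (hb _).mpr rfl⟩
    · intro k hk
      exact absurd (hM.1.1 k) (not_le_of_gt hk)
    · intro k _ z _ z' _
      by_cases h1 : C.E (C.pair k z) D₀
      · by_cases h2 : C.E (C.pair k z') D₀
        · right; right
          exact (pair_inj hM C (((hb _).mp h1).trans ((hb _).mp h2).symm)).2
        · exact Or.inr (Or.inl h2)
      · exact Or.inl h1
  have hstep : ∀ n, (fun v : ℕ → M => ∃ D, CntB C (v 0) D (v 2)) (upd v 2 n) →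
      (fun v : ℕ → M => ∃ D, CntB C (v 0) D (v 2)) (upd v 2 (n + 1)) := by
    intro n hn
    have hn' : ∃ D, CntB C a D n := hn
    show ∃ D, CntB C a D (n + 1)
    obtain ⟨D, T1, T2, T3, T4, T2u⟩ := hn'
    obtain ⟨z, hzD, hzE⟩ := T2 n (lt_succ_self hM n)
    set val : M := if Jp C a n then z + 1 else z with hval
    set p := C.pair (n + 1) val with hp
    have hidx : ∀ {x : M}, C.E x D → ∃ k z₀ : M, ¬ n < k ∧ C.pair k z₀ = x := by
      intro x hx
      have hxb : x < D + 1 := lt_trans (E_arg_lt hM C hx) (lt_succ_self hM D)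
      rcases T1 x hxb with h | ⟨k, _, z₀, _, hk2, he⟩
      · exact absurd hx h
      · exact ⟨k, z₀, hk2, he⟩
    have hfresh : ¬ C.E p D := by
      intro hpD
      obtain ⟨k, z₀, hk, he⟩ := hidx hpD
      have := (pair_inj hM C he).1
      rw [this] at hk
      exact hk (lt_succ_self hM n)
    have hD' := E_add_exp2 hM C hfresh
    set D' := D + C.exp2 p with hD'def
    have hDle : D ≤ D' := le_add_of_nonneg_right (hM.1.1 _)
    have hvalD' : val < D' := by
      calc val ≤ p := le_pair_right C _ _ hM
      _ < C.exp2 p := lt_exp2_self hM C p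
      _ ≤ D' := le_add_of_nonneg_left (hM.1.1 D)
    have hnD : n < D := lt_of_le_of_lt (le_pair_left hM C n z) (E_arg_lt hM C hzE)
    refine ⟨D', ?_, ?_, ?_, ?_, ?_⟩
    · -- T1
      intro x _
      by_cases hx : C.E x D'
      · right
        rcases (hD' x).mp hx with hold | hnew
        · obtain ⟨k, hk1, z₀, hz1, hk2, he⟩ := (T1 x
            (lt_trans (E_arg_lt hM C hold) (lt_succ_self hM D))).resolve_left
            (fun h => h hold)
          refine ⟨k, hk1, z₀, hz1, ?_, he⟩
          intro hlt
          exact hk2 (lt_trans (lt_succ_self hM n) hlt)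
        · subst hnew
          refine ⟨n + 1, ?_, val, ?_, lt_irrefl _, rfl⟩
          · exact lt_of_le_of_lt (le_pair_left hM C _ _) (lt_succ_self hM _)
          · exact lt_of_le_of_lt (le_pair_right C _ _ hM) (lt_succ_self hM _)
      · exact Or.inl hx
    · -- T2
      intro k hk
      have hk1 : k ≤ n + 1 := le_of_lt_add_one hM hk
      rcases lt_or_eq_of_le hk1 with hklt | hkeq
      · obtain ⟨z₀, hz₀, hE⟩ := T2 k hklt
        exact ⟨z₀, lt_of_lt_of_le hz₀ hDle, (hD' _).mpr (Or.inl hE)⟩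
      · subst hkeq
        exact ⟨val, hvalD', (hD' _).mpr (Or.inr rfl)⟩
    · -- T3
      obtain ⟨o, ho, hE⟩ := T3
      exact ⟨o, ho, (hD' _).mpr (Or.inl hE)⟩
    · -- T4
      intro k hk z₀ _
      by_cases hE : C.E (C.pair k z₀) D'
      · right
        rcases (hD' _).mp hE with hold | hnew
        · by_cases hkn : k < n
          · have hz₀D : z₀ < D := z_lt_of_E hM C hold
            rcases T4 k hkn z₀ hz₀D with h | ⟨k1, hk1, z1, hz1, hc⟩
            · exact absurd hold h
            · refine ⟨k1, hk1, z1, hz1, ?_⟩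
              rcases hc with ⟨hJ, hE1⟩ | ⟨hJ, hE1⟩
              · exact Or.inl ⟨hJ, (hD' _).mpr (Or.inl hE1)⟩
              · exact Or.inr ⟨hJ, (hD' _).mpr (Or.inl hE1)⟩
          · have hkeq : k = n := le_antisymm (le_of_lt_add_one hM hk) (not_lt.mp hkn)
            subst hkeq
            have hz₀z : z₀ = z := by
              have hz₀D : z₀ < D := z_lt_of_E hM C hold
              rcases T2u k hnD z₀ hz₀D z hzD with h | h | h
              · exact absurd hold h
              · exact absurd hzE h
              · exact h
            subst hz₀z
            by_cases hJ : Jp C a k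
            · refine ⟨k + 1, rfl, z₀ + 1, rfl, Or.inl ⟨hJ, ?_⟩⟩
              have : p = C.pair (k + 1) (z₀ + 1) := by rw [hp, hval, if_pos hJ]
              rw [← this]
              exact (hD' _).mpr (Or.inr rfl)
            · refine ⟨k + 1, rfl, z₀ + 1, rfl, Or.inr ⟨hJ, ?_⟩⟩
              have : p = C.pair (k + 1) z₀ := by rw [hp, hval, if_neg hJ]
              rw [← this]
              exact (hD' _).mpr (Or.inr rfl)
        · exfalso
          have := (pair_inj hM C hnew).1
          rw [this] at hk
          exact lt_irrefl _ hk
      · exact Or.inl hE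
    · -- T2u
      intro k _ z₁ _ z₂ _
      by_cases h1 : C.E (C.pair k z₁) D'
      · by_cases h2 : C.E (C.pair k z₂) D'
        · right; right
          rcases (hD' _).mp h1 with ho1 | hn1 <;> rcases (hD' _).mp h2 with ho2 | hn2
          · have hb1 : k < D := lt_of_le_of_lt (le_pair_left hM C k z₁) (E_arg_lt hM C ho1)
            have hzb1 : z₁ < D := z_lt_of_E hM C ho1
            have hzb2 : z₂ < D := z_lt_of_E hM C ho2
            rcases T2u k hb1 z₁ hzb1 z₂ hzb2 with h | h | h
            · exact absurd ho1 h
            · exact absurd ho2 h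
            · exact h
          · exfalso
            rw [(pair_inj hM C hn2).1] at ho1
            obtain ⟨k'', z₀', hk'', he'⟩ := hidx ho1
            have := (pair_inj hM C he').1
            rw [this] at hk''
            exact hk'' (lt_succ_self hM n)
          · exfalso
            rw [(pair_inj hM C hn1).1] at ho2
            obtain ⟨k'', z₀', hk'', he'⟩ := hidx ho2
            have := (pair_inj hM C he').1
            rw [this] at hk''
            exact hk'' (lt_succ_self hM n)
          · have e1 := (pair_inj hM C hn1).2
            have e2 := (pair_inj hM C hn2).2
            rw [e1, e2]
        · exact Or.inr (Or.inl h2)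
      · exact Or.inl h1
  have hall := sig_ind hM hSig 2 v hbase hstep B
  exact hall

end CntExists


/-! ### Layer 6c: properties of counting codes -/

section CntProps

variable {M : Type} [CommSemiring M] [LinearOrder M] [IsStrictOrderedRing M]
variable (hM : ModelsISigma1 M) (C : AckCoding M)
include hM

variable {a D N : M}

lemma c_unique (hD : CntB C a D N) {k z z' : M}
    (h1 : C.E (C.pair k z) D) (h2 : C.E (C.pair k z') D) : z = z' := by
  have hkD : k < D := lt_of_le_of_lt (le_pair_left hM C k z) (E_arg_lt hM C h1)
  rcases hD.2.2.2.2 k hkD z (z_lt_of_E hM C h1) z' (z_lt_of_E hM C h2) with h | h | h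
  · exact absurd h1 h
  · exact absurd h2 h
  · exact h

lemma c_zero (hD : CntB C a D N) {z : M} (h : C.E (C.pair 0 z) D) : z = 0 := by
  obtain ⟨o, ho, hE⟩ := hD.2.2.1
  subst ho
  exact c_unique hM C hD h hE

lemma c_mono (hD : CntB C a D N) :
    ∀ t k z z' : M, k + t < N + 1 → C.E (C.pair k z) D →
      C.E (C.pair (k + t) z') D → z ≤ z' := by
  classical
  have hd1 : Del (fun v : ℕ → M => v 7 = v 4 + v 2) := by
    refine del_congr (fun v => ?_) (del_eq (.var 7) (.add (.var 4) (.var 2)))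
    simp [Term.eval]
  have hd2 : Del (fun v : ℕ → M => ¬ v 7 < v 3 + 1) := by
    refine del_congr (fun v => ?_) (Del.not (del_lt (.var 7) (.add (.var 3) .one)))
    simp [Term.eval]
  have hd3 : Del (fun v : ℕ → M => ¬ v 6 < v 5) := by
    refine del_congr (fun v => ?_) (Del.not (del_lt (.var 6) (.var 5)))
    simp [Term.eval]
  have hor := hd2.sig.or ((sigNEPk hM C 4 5 1).or ((sigNEPk hM C 7 6 1).or hd3.sig))
  have hex := Sig.ex 7 (hd1.sig.and hor)
  have hball := Sig.ball hM 4 (.var 1) (by decide) (Sig.ball hM 5 (.var 1) (by decide)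
    (Sig.ball hM 6 (.var 1) (by decide) hex))
  have hSig : Sig (fun v : ℕ → M => ∀ k < v 1, ∀ z < v 1, ∀ z' < v 1,
      ∃ s, s = k + v 2 ∧ (¬ s < v 3 + 1 ∨ (¬ C.E (C.pair k z) (v 1) ∨
        (¬ C.E (C.pair s z') (v 1) ∨ ¬ z' < z)))) := hball
  set v : ℕ → M := fun k => if k = 1 then D else if k = 3 then N else 0 with hv
  have hbase : (fun v : ℕ → M => ∀ k < v 1, ∀ z < v 1, ∀ z' < v 1,
      ∃ s, s = k + v 2 ∧ (¬ s < v 3 + 1 ∨ (¬ C.E (C.pair k z) (v 1) ∨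
        (¬ C.E (C.pair s z') (v 1) ∨ ¬ z' < z)))) (upd v 2 0) := by
    show ∀ k < D, ∀ z < D, ∀ z' < D, ∃ s, s = k + 0 ∧ (¬ s < N + 1 ∨
      (¬ C.E (C.pair k z) D ∨ (¬ C.E (C.pair s z') D ∨ ¬ z' < z)))
    intro k _ z _ z' _
    refine ⟨k + 0, rfl, ?_⟩
    by_cases h1 : C.E (C.pair k z) D
    · by_cases h2 : C.E (C.pair (k + 0) z') D
      · rw [add_zero] at h2
        have := c_unique hM C hD h1 h2
        exact Or.inr (Or.inr (Or.inr (by rw [this]; exact lt_irrefl _)))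
      · exact Or.inr (Or.inr (Or.inl h2))
    · exact Or.inr (Or.inl h1)
  have hstep : ∀ t, (fun v : ℕ → M => ∀ k < v 1, ∀ z < v 1, ∀ z' < v 1,
      ∃ s, s = k + v 2 ∧ (¬ s < v 3 + 1 ∨ (¬ C.E (C.pair k z) (v 1) ∨
        (¬ C.E (C.pair s z') (v 1) ∨ ¬ z' < z)))) (upd v 2 t) →
      (fun v : ℕ → M => ∀ k < v 1, ∀ z < v 1, ∀ z' < v 1,
      ∃ s, s = k + v 2 ∧ (¬ s < v 3 + 1 ∨ (¬ C.E (C.pair k z) (v 1) ∨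
        (¬ C.E (C.pair s z') (v 1) ∨ ¬ z' < z)))) (upd v 2 (t + 1)) := by
    intro t ht
    have IH : ∀ k < D, ∀ z < D, ∀ z' < D, ∃ s, s = k + t ∧ (¬ s < N + 1 ∨
      (¬ C.E (C.pair k z) D ∨ (¬ C.E (C.pair s z') D ∨ ¬ z' < z))) := ht
    show ∀ k < D, ∀ z < D, ∀ z' < D, ∃ s, s = k + (t + 1) ∧ (¬ s < N + 1 ∨
      (¬ C.E (C.pair k z) D ∨ (¬ C.E (C.pair s z') D ∨ ¬ z' < z)))
    intro k hkD z hzD z' hz'D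
    refine ⟨k + (t + 1), rfl, ?_⟩
    by_cases hg : k + (t + 1) < N + 1
    swap
    · exact Or.inl hg
    by_cases h1 : C.E (C.pair k z) D
    swap
    · exact Or.inr (Or.inl h1)
    by_cases h2 : C.E (C.pair (k + (t + 1)) z') D
    swap
    · exact Or.inr (Or.inr (Or.inl h2))
    refine Or.inr (Or.inr (Or.inr ?_))
    have hs : k + (t + 1) = (k + t) + 1 := by rw [add_assoc]
    rw [hs] at hg h2
    have hs0N : k + t < N := by
      have h1' : (k + t) + 1 ≤ N := le_of_lt_add_one hM hg
      exact lt_of_lt_of_le (lt_succ_self hM _) h1'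
    obtain ⟨z₀, hz₀D, hz₀E⟩ := hD.2.1 (k + t) (lt_trans hs0N (lt_succ_self hM N))
    obtain ⟨s', hs', hor⟩ := IH k hkD z hzD z₀ hz₀D
    subst hs'
    have hzz₀ : z ≤ z₀ := by
      rcases hor with h | h | h | h
      · exact absurd (lt_trans hs0N (lt_succ_self hM N)) h
      · exact absurd h1 h
      · exact absurd hz₀E h
      · exact not_lt.mp h
    rcases hD.2.2.2.1 (k + t) hs0N z₀ hz₀D with h | ⟨k1, hk1, z1, hz1, hc⟩
    · exact absurd hz₀E h
    subst hk1
    subst hz1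
    intro hz'z
    rcases hc with ⟨_, hE1⟩ | ⟨_, hE1⟩
    · have hzeq := c_unique hM C hD h2 hE1
      rw [hzeq] at hz'z
      exact absurd (lt_trans hz'z (lt_of_le_of_lt hzz₀ (lt_succ_self hM z₀)))
        (lt_irrefl _)
    · have hzeq := c_unique hM C hD h2 hE1
      rw [hzeq] at hz'z
      exact absurd (lt_of_lt_of_le hz'z hzz₀) (lt_irrefl _)
  intro t k z z' hg h1 h2
  have hall := sig_ind hM hSig 2 v hbase hstep t
  have IH : ∀ k < D, ∀ z < D, ∀ z' < D, ∃ s, s = k + t ∧ (¬ s < N + 1 ∨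
      (¬ C.E (C.pair k z) D ∨ (¬ C.E (C.pair s z') D ∨ ¬ z' < z))) := hall
  have hkD : k < D := lt_of_le_of_lt (le_pair_left hM C k z) (E_arg_lt hM C h1)
  obtain ⟨s, hs, hor⟩ := IH k hkD z (z_lt_of_E hM C h1) z' (z_lt_of_E hM C h2)
  subst hs
  rcases hor with h | h | h | h
  · exact absurd hg h
  · exact absurd h1 h
  · exact absurd h2 h
  · exact not_lt.mp h

lemma c_le (hD : CntB C a D N) :
    ∀ k z : M, k < N + 1 → C.E (C.pair k z) D → z ≤ k := by
  classical
  have hd1 : Del (fun v : ℕ → M => ¬ v 2 < v 3 + 1) := by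
    refine del_congr (fun v => ?_) (Del.not (del_lt (.var 2) (.add (.var 3) .one)))
    simp [Term.eval]
  have hd2 : Del (fun v : ℕ → M => ¬ v 2 < v 4) := by
    refine del_congr (fun v => ?_) (Del.not (del_lt (.var 2) (.var 4)))
    simp [Term.eval]
  have hor := hd1.sig.or ((sigNEPk hM C 2 4 1).or hd2.sig)
  have hball := Sig.ball hM 4 (.var 1) (by decide) hor
  have hSig : Sig (fun v : ℕ → M => ∀ z < v 1, (¬ v 2 < v 3 + 1 ∨
      (¬ C.E (C.pair (v 2) z) (v 1) ∨ ¬ v 2 < z))) := hball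
  set v : ℕ → M := fun k => if k = 1 then D else if k = 3 then N else 0 with hv
  have hbase : (fun v : ℕ → M => ∀ z < v 1, (¬ v 2 < v 3 + 1 ∨
      (¬ C.E (C.pair (v 2) z) (v 1) ∨ ¬ v 2 < z))) (upd v 2 0) := by
    show ∀ z < D, (¬ (0 : M) < N + 1 ∨ (¬ C.E (C.pair 0 z) D ∨ ¬ (0 : M) < z))
    intro z _
    by_cases hE : C.E (C.pair 0 z) D
    · have := c_zero hM C hD hE
      exact Or.inr (Or.inr (by rw [this]; exact lt_irrefl _))
    · exact Or.inr (Or.inl hE)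
  have hstep : ∀ k, (fun v : ℕ → M => ∀ z < v 1, (¬ v 2 < v 3 + 1 ∨
      (¬ C.E (C.pair (v 2) z) (v 1) ∨ ¬ v 2 < z))) (upd v 2 k) →
      (fun v : ℕ → M => ∀ z < v 1, (¬ v 2 < v 3 + 1 ∨
      (¬ C.E (C.pair (v 2) z) (v 1) ∨ ¬ v 2 < z))) (upd v 2 (k + 1)) := by
    intro k hk
    have IH : ∀ z < D, (¬ k < N + 1 ∨ (¬ C.E (C.pair k z) D ∨ ¬ k < z)) := hk
    show ∀ z < D, (¬ k + 1 < N + 1 ∨ (¬ C.E (C.pair (k + 1) z) D ∨ ¬ k + 1 < z))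
    intro z hzD
    by_cases hg : k + 1 < N + 1
    swap
    · exact Or.inl hg
    by_cases hE : C.E (C.pair (k + 1) z) D
    swap
    · exact Or.inr (Or.inl hE)
    refine Or.inr (Or.inr ?_)
    have hkN : k < N := by
      have := le_of_lt_add_one hM hg
      exact lt_of_lt_of_le (lt_succ_self hM k) this
    obtain ⟨z₀, hz₀D, hz₀E⟩ := hD.2.1 k (lt_trans hkN (lt_succ_self hM N))
    have hz₀k : z₀ ≤ k := by
      rcases IH z₀ hz₀D with h | h | h
      · exact absurd (lt_trans hkN (lt_succ_self hM N)) h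
      · exact absurd hz₀E h
      · exact not_lt.mp h
    rcases hD.2.2.2.1 k hkN z₀ hz₀D with h | ⟨k1, hk1, z1, hz1, hc⟩
    · exact absurd hz₀E h
    subst hk1
    subst hz1
    intro hlt
    rcases hc with ⟨_, hE1⟩ | ⟨_, hE1⟩
    · have hzeq := c_unique hM C hD hE hE1
      rw [hzeq] at hlt
      have : k + 1 < k + 1 := lt_of_lt_of_le hlt (add_le_add_left hz₀k 1)
      exact lt_irrefl _ this
    · have hzeq := c_unique hM C hD hE hE1
      rw [hzeq] at hlt
      have h' : k + 1 < k := lt_of_lt_of_le hlt hz₀k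
      exact absurd (lt_trans h' (lt_succ_self hM k)) (lt_irrefl _)
  intro k z hg hE
  have hall := sig_ind hM hSig 2 v hbase hstep k
  have IH : ∀ z < D, (¬ k < N + 1 ∨ (¬ C.E (C.pair k z) D ∨ ¬ k < z)) := hall
  rcases IH z (z_lt_of_E hM C hE) with h | h | h
  · exact absurd hg h
  · exact absurd hE h
  · exact not_lt.mp h

lemma c_succ (hD : CntB C a D N) {k z z' : M} (hk : k < N)
    (h1 : C.E (C.pair k z) D) (h2 : C.E (C.pair (k + 1) z') D) :
    (Jp C a k → z' = z + 1) ∧ (¬ Jp C a k → z' = z) := by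
  rcases hD.2.2.2.1 k hk z (z_lt_of_E hM C h1) with h | ⟨k1, hk1, z1, hz1, hc⟩
  · exact absurd h1 h
  subst hk1
  subst hz1
  rcases hc with ⟨hJ, hE1⟩ | ⟨hJ, hE1⟩
  · exact ⟨fun _ => c_unique hM C hD h2 hE1, fun hnJ => absurd hJ hnJ⟩
  · exact ⟨fun hJ' => absurd hJ' hJ, fun _ => c_unique hM C hD h2 hE1⟩

lemma c_surj (hD : CntB C a D N) :
    ∀ k z i : M, k < N + 1 → C.E (C.pair k z) D → i < z →
      ∃ j, j < k ∧ Jp C a j ∧ C.E (C.pair j i) D := by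
  classical
  have hd1 : Del (fun v : ℕ → M => ¬ v 2 < v 3 + 1) := by
    refine del_congr (fun v => ?_) (Del.not (del_lt (.var 2) (.add (.var 3) .one)))
    simp [Term.eval]
  have hin := (sigJk hM C 0 6).and (sigEPk hM C 6 5 1)
  have hbexj := Sig.bex 6 (.var 2) (by decide) hin
  have hor := hd1.sig.or ((sigNEPk hM C 2 4 1).or hbexj)
  have hball := Sig.ball hM 4 (.var 1) (by decide) (Sig.ball hM 5 (.var 4) (by decide) hor)
  have hSig : Sig (fun v : ℕ → M => ∀ z < v 1, ∀ i < z, (¬ v 2 < v 3 + 1 ∨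
      (¬ C.E (C.pair (v 2) z) (v 1) ∨
        ∃ j, j < v 2 ∧ (Jp C (v 0) j ∧ C.E (C.pair j i) (v 1))))) := by
    have h := Sig.ball hM 4 (.var 1) (by decide) (Sig.ball hM 5 (.var 4) (by decide) hor)
    exact h
  set v : ℕ → M := fun k => if k = 0 then a else if k = 1 then D else
    if k = 3 then N else 0 with hv
  have hbase : (fun v : ℕ → M => ∀ z < v 1, ∀ i < z, (¬ v 2 < v 3 + 1 ∨
      (¬ C.E (C.pair (v 2) z) (v 1) ∨
        ∃ j, j < v 2 ∧ (Jp C (v 0) j ∧ C.E (C.pair j i) (v 1))))) (upd v 2 0) := by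
    show ∀ z < D, ∀ i < z, (¬ (0 : M) < N + 1 ∨ (¬ C.E (C.pair 0 z) D ∨
      ∃ j, j < (0 : M) ∧ (Jp C a j ∧ C.E (C.pair j i) D)))
    intro z _ i hi
    by_cases hE : C.E (C.pair 0 z) D
    · have hz0 := c_zero hM C hD hE
      rw [hz0] at hi
      exact absurd (hM.1.1 i) (not_le_of_gt hi)
    · exact Or.inr (Or.inl hE)
  have hstep : ∀ k, (fun v : ℕ → M => ∀ z < v 1, ∀ i < z, (¬ v 2 < v 3 + 1 ∨
      (¬ C.E (C.pair (v 2) z) (v 1) ∨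
        ∃ j, j < v 2 ∧ (Jp C (v 0) j ∧ C.E (C.pair j i) (v 1))))) (upd v 2 k) →
      (fun v : ℕ → M => ∀ z < v 1, ∀ i < z, (¬ v 2 < v 3 + 1 ∨
      (¬ C.E (C.pair (v 2) z) (v 1) ∨
        ∃ j, j < v 2 ∧ (Jp C (v 0) j ∧ C.E (C.pair j i) (v 1))))) (upd v 2 (k + 1)) := by
    intro k hk
    have IH : ∀ z < D, ∀ i < z, (¬ k < N + 1 ∨ (¬ C.E (C.pair k z) D ∨
      ∃ j, j < k ∧ (Jp C a j ∧ C.E (C.pair j i) D))) := hk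
    show ∀ z < D, ∀ i < z, (¬ k + 1 < N + 1 ∨ (¬ C.E (C.pair (k + 1) z) D ∨
      ∃ j, j < k + 1 ∧ (Jp C a j ∧ C.E (C.pair j i) D)))
    intro z hzD i hi
    by_cases hg : k + 1 < N + 1
    swap
    · exact Or.inl hg
    by_cases hE : C.E (C.pair (k + 1) z) D
    swap
    · exact Or.inr (Or.inl hE)
    refine Or.inr (Or.inr ?_)
    have hkN : k < N := lt_of_lt_of_le (lt_succ_self hM k) (le_of_lt_add_one hM hg)
    obtain ⟨z₀, hz₀D, hz₀E⟩ := hD.2.1 k (lt_trans hkN (lt_succ_self hM N))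
    have hcs := c_succ hM C hD hkN hz₀E hE
    by_cases hJ : Jp C a k
    · have hz : z = z₀ + 1 := hcs.1 hJ
      rw [hz] at hi
      rcases lt_or_eq_of_le (le_of_lt_add_one hM hi) with hilt | hieq
      · rcases IH z₀ hz₀D i hilt with h | h | ⟨j, hj, hJj, hEj⟩
        · exact absurd (lt_trans hkN (lt_succ_self hM N)) h
        · exact absurd hz₀E h
        · exact ⟨j, lt_trans hj (lt_succ_self hM k), hJj, hEj⟩
      · subst hieq
        exact ⟨k, lt_succ_self hM k, hJ, hz₀E⟩
    · have hz : z = z₀ := hcs.2 hJ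
      rw [hz] at hi
      rcases IH z₀ hz₀D i hi with h | h | ⟨j, hj, hJj, hEj⟩
      · exact absurd (lt_trans hkN (lt_succ_self hM N)) h
      · exact absurd hz₀E h
      · exact ⟨j, lt_trans hj (lt_succ_self hM k), hJj, hEj⟩
  intro k z i hg hE hi
  have hall := sig_ind hM hSig 2 v hbase hstep k
  have IH : ∀ z < D, ∀ i < z, (¬ k < N + 1 ∨ (¬ C.E (C.pair k z) D ∨
      ∃ j, j < k ∧ (Jp C a j ∧ C.E (C.pair j i) D))) := hall
  rcases IH z (z_lt_of_E hM C hE) i hi with h | h | h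
  · exact absurd hg h
  · exact absurd hE h
  · exact h

end CntProps


/-! ### Layer 7: generic coding of Σ₁ graphs -/

section GraphCode

variable {M : Type} [CommSemiring M] [LinearOrder M] [IsStrictOrderedRing M]

lemma sig_of6 {Φ : M → M → M → M → M → M → Prop}
    (h : Sig (fun v => Φ (v 0) (v 1) (v 2) (v 3) (v 4) (v 5)))
    (k0 k1 k2 k3 k4 k5 : ℕ) :
    Sig (fun v => Φ (v k0) (v k1) (v k2) (v k3) (v k4) (v k5)) := by
  refine sig_congr (fun v => ?_)
    (h.subst (fun k => if k = 0 then k0 else if k = 1 then k1 else if k = 2 then k2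
      else if k = 3 then k3 else if k = 4 then k4 else k5))
  simp

variable (hM : ModelsISigma1 M) (C : AckCoding M)
variable (R : M → M → M → M → M → M → Prop)

/-- `F` codes the graph of the function `i ↦ R(i, ·)` on `[0, n]`. -/
def GCode (p1 p2 p3 p4 F n : M) : Prop :=
  (∀ x < F + 1, (¬ C.E x F ∨ ∃ i, i < x + 1 ∧ ∃ y, y < x + 1 ∧
    (¬ n < i ∧ (C.pair i y = x ∧ R i y p1 p2 p3 p4)))) ∧
  (∀ i < n + 1, ∃ y, y < p1 ∧ C.E (C.pair i y) F)

include hM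

lemma sigGCode (hR : Sig (fun v : ℕ → M => R (v 0) (v 1) (v 2) (v 3) (v 4) (v 5))) :
    Sig (fun v : ℕ → M => GCode C R (v 2) (v 3) (v 4) (v 5) (v 1) (v 6)) := by
  have hRr := sig_of6 (Φ := R) hR 8 9 2 3 4 5
  have hin := (Del.not (del_lt (.var 6) (.var 8))).sig.and
    (((del_pairk hM C 8 9 7).sig).and hRr)
  have hy := Sig.bex 9 (.add (.var 7) .one) (by decide) hin
  have hi := Sig.bex 8 (.add (.var 7) .one) (by decide) hy
  have hS1 := Sig.ball hM 7 (.add (.var 1) .one) (by decide)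
    ((sigNEk hM C 7 1).or hi)
  have hS2 := Sig.ball hM 8 (.add (.var 6) .one) (by decide)
    (Sig.bex 9 (.var 2) (by decide) (sigEPk hM C 8 9 1))
  exact hS1.and hS2

variable {p1 p2 p3 p4 : M}

lemma graph_code (hR : Sig (fun v : ℕ → M => R (v 0) (v 1) (v 2) (v 3) (v 4) (v 5)))
    (htot : ∀ i : M, ∃ y : M, y < p1 ∧ R i y p1 p2 p3 p4)
    (n : M) : ∃ F : M, GCode C R p1 p2 p3 p4 F n := by
  classical
  have hSig : Sig (fun v : ℕ → M =>
      ∃ F, GCode C R (v 2) (v 3) (v 4) (v 5) F (v 6)) :=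
    Sig.ex 1 (sigGCode hM C R hR)
  set v : ℕ → M := fun k => if k = 2 then p1 else if k = 3 then p2 else
    if k = 4 then p3 else if k = 5 then p4 else 0 with hv
  have hbase : (fun v : ℕ → M =>
      ∃ F, GCode C R (v 2) (v 3) (v 4) (v 5) F (v 6)) (upd v 6 0) := by
    show ∃ F, GCode C R p1 p2 p3 p4 F 0
    obtain ⟨y₀, hy₀b, hy₀R⟩ := htot 0
    have hb := hbit0 hM C (C.pair (0 : M) y₀)
    refine ⟨C.exp2 (C.pair 0 y₀), ?_, ?_⟩
    · intro x _
      by_cases hx : C.E x (C.exp2 (C.pair 0 y₀))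
      · right
        have hx0 : x = C.pair 0 y₀ := (hb x).mp hx
        refine ⟨0, zero_lt_succ hM x, y₀, ?_, lt_irrefl 0, hx0.symm, hy₀R⟩
        rw [lt_add_one_iff hM, hx0]
        exact le_pair_right C _ _ hM
      · exact Or.inl hx
    · intro i hi
      have hi0 : i = 0 := le_antisymm (by simpa using le_of_lt_add_one hM hi) (hM.1.1 i)
      subst hi0
      exact ⟨y₀, hy₀b, (hb _).mpr rfl⟩
  have hstep : ∀ n', (fun v : ℕ → M =>
      ∃ F, GCode C R (v 2) (v 3) (v 4) (v 5) F (v 6)) (upd v 6 n') →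
      (fun v : ℕ → M =>
      ∃ F, GCode C R (v 2) (v 3) (v 4) (v 5) F (v 6)) (upd v 6 (n' + 1)) := by
    intro n' hn
    have hn' : ∃ F, GCode C R p1 p2 p3 p4 F n' := hn
    show ∃ F, GCode C R p1 p2 p3 p4 F (n' + 1)
    obtain ⟨F, S1, S2⟩ := hn'
    obtain ⟨y₁, hy₁b, hy₁R⟩ := htot (n' + 1)
    set p := C.pair (n' + 1) y₁ with hp
    have hidx : ∀ {x : M}, C.E x F → ∃ i y : M, ¬ n' < i ∧ C.pair i y = x ∧
        R i y p1 p2 p3 p4 := by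
      intro x hx
      rcases S1 x (lt_trans (E_arg_lt hM C hx) (lt_succ_self hM F)) with h | h
      · exact absurd hx h
      · obtain ⟨i, _, y, _, hi2, he, hR'⟩ := h
        exact ⟨i, y, hi2, he, hR'⟩
    have hfresh : ¬ C.E p F := by
      intro hpF
      obtain ⟨i, y, hi, he, _⟩ := hidx hpF
      rw [(pair_inj hM C he).1] at hi
      exact hi (lt_succ_self hM n')
    have hF' := E_add_exp2 hM C hfresh
    refine ⟨F + C.exp2 p, ?_, ?_⟩
    · intro x _
      by_cases hx : C.E x (F + C.exp2 p)
      · right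
        rcases (hF' x).mp hx with hold | hnew
        · obtain ⟨i, y, hi2, he, hR'⟩ := hidx hold
          refine ⟨i, ?_, y, ?_, ?_, he, hR'⟩
          · rw [lt_add_one_iff hM, ← he]
            exact le_pair_left hM C _ _
          · rw [lt_add_one_iff hM, ← he]
            exact le_pair_right C _ _ hM
          · intro hlt
            exact hi2 (lt_trans (lt_succ_self hM n') hlt)
        · subst hnew
          refine ⟨n' + 1, ?_, y₁, ?_, lt_irrefl _, rfl, hy₁R⟩
          · rw [lt_add_one_iff hM]
            exact le_pair_left hM C _ _
          · rw [lt_add_one_iff hM]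
            exact le_pair_right C _ _ hM
      · exact Or.inl hx
    · intro i hi
      have hi1 : i ≤ n' + 1 := le_of_lt_add_one hM hi
      rcases lt_or_eq_of_le hi1 with hilt | hieq
      · obtain ⟨y, hyb, hyE⟩ := S2 i hilt
        exact ⟨y, hyb, (hF' _).mpr (Or.inl hyE)⟩
      · subst hieq
        exact ⟨y₁, hy₁b, (hF' _).mpr (Or.inr rfl)⟩
  exact sig_ind hM hSig 6 v hbase hstep n

variable {F n : M}

lemma gcode_val (hG : GCode C R p1 p2 p3 p4 F n) {i y : M}
    (h : C.E (C.pair i y) F) : R i y p1 p2 p3 p4 := by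
  rcases hG.1 _ (lt_trans (E_arg_lt hM C h) (lt_succ_self hM F)) with h' | h'
  · exact absurd h h'
  · obtain ⟨i', _, y', _, _, he, hR'⟩ := h'
    obtain ⟨h1, h2⟩ := pair_inj hM C he
    rw [← h1, ← h2]
    exact hR'

lemma gcode_idx (hG : GCode C R p1 p2 p3 p4 F n) {i y : M}
    (h : C.E (C.pair i y) F) : ¬ n < i := by
  rcases hG.1 _ (lt_trans (E_arg_lt hM C h) (lt_succ_self hM F)) with h' | h'
  · exact absurd h h'
  · obtain ⟨i', _, y', _, hi2, he, _⟩ := h'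
    rw [← (pair_inj hM C he).1]
    exact hi2

lemma gcode_fun (hG : GCode C R p1 p2 p3 p4 F n)
    (hfun : ∀ i y y' : M, R i y p1 p2 p3 p4 → R i y' p1 p2 p3 p4 → y = y')
    {i y y' : M} (h : C.E (C.pair i y) F) (h' : C.E (C.pair i y') F) : y = y' :=
  hfun i y y' (gcode_val hM C R hG h) (gcode_val hM C R hG h')

end GraphCode


/-! ### Layer 8: the enumeration and value relations -/

section MainRelations

variable {M : Type} [CommSemiring M] [LinearOrder M] [IsStrictOrderedRing M]
variable (hM : ModelsISigma1 M) (C : AckCoding M)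

/-- The graph of the function `i ↦` (the `i`-th element of the least-index set). -/
def RF (C : AckCoding M) (i j _q1 q2 q3 q4 : M) : Prop :=
  ∃ s, s = q4 + 1 ∧
    ((∃ z, z < q3 ∧ (C.E (C.pair s z) q3 ∧ (i < z ∧ (j < s ∧
      (Jp C q2 j ∧ C.E (C.pair j i) q3))))) ∨
     ((∀ z < q3, (¬ C.E (C.pair s z) q3 ∨ ¬ i < z)) ∧ j = 0))

/-- The graph of the function `i ↦ (a)_{f(i)}`. -/
def RG (C : AckCoding M) (i y _q1 q2 q3 q4 : M) : Prop :=
  ∃ s, s = q4 + 1 ∧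
    ((∃ z, z < q3 ∧ (C.E (C.pair s z) q3 ∧ (i < z ∧ ∃ j, j < s ∧
      (Jp C q2 j ∧ (C.E (C.pair j i) q3 ∧ C.proj q2 j = y))))) ∨
     ((∀ z < q3, (¬ C.E (C.pair s z) q3 ∨ ¬ i < z)) ∧ y = 0))

include hM

lemma sigRF : Sig (fun v : ℕ → M => RF C (v 0) (v 1) (v 2) (v 3) (v 4) (v 5)) := by
  have hseq : Del (fun v : ℕ → M => v 6 = v 5 + 1) := by
    refine del_congr (fun v => ?_) (del_eq (.var 6) (.add (.var 5) .one))
    simp [Term.eval]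
  have hiz : Del (fun v : ℕ → M => v 0 < v 7) := by
    refine del_congr (fun v => ?_) (del_lt (.var 0) (.var 7))
    simp [Term.eval]
  have hjs : Del (fun v : ℕ → M => v 1 < v 6) := by
    refine del_congr (fun v => ?_) (del_lt (.var 1) (.var 6))
    simp [Term.eval]
  have hj0 : Del (fun v : ℕ → M => v 1 = (0 : M)) := by
    refine del_congr (fun v => ?_) (del_eq (.var 1) .zero)
    simp [Term.eval]
  have hniz : Del (fun v : ℕ → M => ¬ v 0 < v 7) := by
    refine del_congr (fun v => ?_) (Del.not (del_lt (.var 0) (.var 7)))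
    simp [Term.eval]
  have hleft := Sig.bex 7 (.var 4) (by decide)
    ((sigEPk hM C 6 7 4).and (hiz.sig.and (hjs.sig.and
      ((sigJk hM C 3 1).and (sigEPk hM C 1 0 4)))))
  have hright := (Sig.ball hM 7 (.var 4) (by decide)
    ((sigNEPk hM C 6 7 4).or hniz.sig)).and hj0.sig
  exact Sig.ex 6 (hseq.sig.and (hleft.or hright))

lemma sigRG : Sig (fun v : ℕ → M => RG C (v 0) (v 1) (v 2) (v 3) (v 4) (v 5)) := by
  have hseq : Del (fun v : ℕ → M => v 6 = v 5 + 1) := by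
    refine del_congr (fun v => ?_) (del_eq (.var 6) (.add (.var 5) .one))
    simp [Term.eval]
  have hiz : Del (fun v : ℕ → M => v 0 < v 7) := by
    refine del_congr (fun v => ?_) (del_lt (.var 0) (.var 7))
    simp [Term.eval]
  have hjs : Del (fun v : ℕ → M => v 8 < v 6) := by
    refine del_congr (fun v => ?_) (del_lt (.var 8) (.var 6))
    simp [Term.eval]
  have hy0 : Del (fun v : ℕ → M => v 1 = (0 : M)) := by
    refine del_congr (fun v => ?_) (del_eq (.var 1) .zero)
    simp [Term.eval]
  have hniz : Del (fun v : ℕ → M => ¬ v 0 < v 7) := by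
    refine del_congr (fun v => ?_) (Del.not (del_lt (.var 0) (.var 7)))
    simp [Term.eval]
  have hleft := Sig.bex 7 (.var 4) (by decide)
    ((sigEPk hM C 6 7 4).and (hiz.sig.and (Sig.ex 8 (hjs.sig.and
      ((sigJk hM C 3 8).and ((sigEPk hM C 8 0 4).and (sigProjk hM C 3 8 1)))))))
  have hright := (Sig.ball hM 7 (.var 4) (by decide)
    ((sigNEPk hM C 6 7 4).or hniz.sig)).and hy0.sig
  exact Sig.ex 6 (hseq.sig.and (hleft.or hright))

variable {a D B L : M}

/-- Injectivity of the counting function on the least-index set. -/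
lemma J_inj (hD : CntB C a D (B + 1)) {j j' i : M} (hj : j < B + 1) (hj' : j' < B + 1)
    (hJj : Jp C a j) (hJj' : Jp C a j')
    (hE : C.E (C.pair j i) D) (hE' : C.E (C.pair j' i) D) : j = j' := by
  have key : ∀ u u' : M, u < B + 1 → u' < B + 1 → Jp C a u →
      C.E (C.pair u i) D → C.E (C.pair u' i) D → u < u' → False := by
    intro u u' hu hu' hJu hEu hEu' huu
    obtain ⟨w, _, hwE⟩ := hD.2.1 (u + 1) (by
      have : u + 1 ≤ u' := hM.1.2 _ _ huu
      exact lt_of_le_of_lt this (lt_trans hu' (lt_succ_self hM _)))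
    have hw : w = i + 1 := (c_succ hM C hD hu hEu hwE).1 hJu
    obtain ⟨t, ht⟩ := sub_of_le hM (hM.1.2 _ _ huu)
    have hmono := c_mono hM C hD t (u + 1) w i (by
      rw [ht]; exact lt_trans hu' (lt_succ_self hM _)) hwE (by rw [ht]; exact hEu')
    rw [hw] at hmono
    exact absurd (lt_of_lt_of_le (lt_succ_self hM i) hmono) (lt_irrefl i)
  rcases lt_trichotomy j j' with h | h | h
  · exact absurd (key j j' hj hj' hJj hE hE' h) (fun f => f)
  · exact h
  · exact absurd (key j' j hj' hj hJj' hE' hE h) (fun f => f)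

lemma RF_tot (hD : CntB C a D (B + 1)) (hLE : C.E (C.pair (B + 1) L) D) (hLb : L < D) :
    ∀ i : M, ∃ j : M, j < B + 2 ∧ RF C i j (B + 2) a D B := by
  classical
  intro i
  have hBB : B + 1 + 1 = B + 2 := by ring
  by_cases hi : i < L
  · obtain ⟨j, hj, hJj, hEj⟩ := c_surj hM C hD (B + 1) L i (lt_succ_self hM _) hLE hi
    refine ⟨j, hBB ▸ lt_trans hj (lt_succ_self hM _), B + 1, rfl,
      Or.inl ⟨L, hLb, hLE, hi, hj, hJj, hEj⟩⟩
  · refine ⟨0, hBB ▸ zero_lt_succ hM (B + 1), B + 1, rfl, Or.inr ⟨?_, rfl⟩⟩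
    intro z _
    by_cases hz : C.E (C.pair (B + 1) z) D
    · right
      rw [c_unique hM C hD hz hLE]
      exact hi
    · exact Or.inl hz

lemma RF_fun (hD : CntB C a D (B + 1)) :
    ∀ i j j' : M, RF C i j (B + 2) a D B → RF C i j' (B + 2) a D B → j = j' := by
  rintro i j j' ⟨s, rfl, h⟩ ⟨s', rfl, h'⟩
  rcases h with ⟨z, hzb, hzE, hiz, hjs, hJj, hEj⟩ | ⟨hno, rfl⟩
  · rcases h' with ⟨z', hzb', hzE', hiz', hjs', hJj', hEj'⟩ | ⟨hno', _⟩
    · exact J_inj hM C hD hjs hjs' hJj hJj' hEj hEj'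
    · exfalso
      rcases hno' z hzb with hc | hc
      · exact hc hzE
      · exact hc hiz
  · rcases h' with ⟨z', hzb', hzE', hiz', _, _, _⟩ | ⟨_, rfl⟩
    · exfalso
      rcases hno z' hzb' with hc | hc
      · exact hc hzE'
      · exact hc hiz'
    · rfl

lemma RG_tot (hD : CntB C a D (B + 1)) (hLE : C.E (C.pair (B + 1) L) D) (hLb : L < D) :
    ∀ i : M, ∃ y : M, y < a + 1 ∧ RG C i y (a + 1) a D B := by
  classical
  intro i
  by_cases hi : i < L
  · obtain ⟨j, hj, hJj, hEj⟩ := c_surj hM C hD (B + 1) L i (lt_succ_self hM _) hLE hi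
    refine ⟨C.proj a j, lt_of_le_of_lt (proj_le hM C) (lt_succ_self hM a), B + 1, rfl,
      Or.inl ⟨L, hLb, hLE, hi, j, hj, hJj, hEj, rfl⟩⟩
  · refine ⟨0, zero_lt_succ hM _, B + 1, rfl, Or.inr ⟨?_, rfl⟩⟩
    intro z _
    by_cases hz : C.E (C.pair (B + 1) z) D
    · right
      rw [c_unique hM C hD hz hLE]
      exact hi
    · exact Or.inl hz

lemma RG_fun (hD : CntB C a D (B + 1)) :
    ∀ i y y' : M, RG C i y (a + 1) a D B → RG C i y' (a + 1) a D B → y = y' := by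
  rintro i y y' ⟨s, rfl, h⟩ ⟨s', rfl, h'⟩
  rcases h with ⟨z, hzb, hzE, hiz, j, hjs, hJj, hEj, hpj⟩ | ⟨hno, rfl⟩
  · rcases h' with ⟨z', hzb', hzE', hiz', j', hjs', hJj', hEj', hpj'⟩ | ⟨hno', _⟩
    · have := J_inj hM C hD hjs hjs' hJj hJj' hEj hEj'
      rw [← hpj, ← hpj', this]
    · exfalso
      rcases hno' z hzb with hc | hc
      · exact hc hzE
      · exact hc hiz
  · rcases h' with ⟨z', hzb', hzE', hiz', _⟩ | ⟨_, rfl⟩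
    · exfalso
      rcases hno z' hzb' with hc | hc
      · exact hc hzE'
      · exact hc hiz'
    · rfl

/-- Extraction of the "defined" case of `RG`. -/
lemma RG_left (hD : CntB C a D (B + 1)) (hLE : C.E (C.pair (B + 1) L) D)
    {i y : M} (hi : i < L) (h : RG C i y (a + 1) a D B) :
    ∃ j, j < B + 1 ∧ (Jp C a j ∧ (C.E (C.pair j i) D ∧ C.proj a j = y)) := by
  obtain ⟨s, rfl, h⟩ := h
  rcases h with ⟨z, hzb, hzE, hiz, j, hjs, hJj, hEj, hpj⟩ | ⟨hno, _⟩
  · exact ⟨j, hjs, hJj, hEj, hpj⟩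
  · exfalso
    have hLD : L < D := z_lt_of_E hM C hLE
    rcases hno L hLD with hc | hc
    · exact hc hLE
    · exact hc hi

lemma RF_left (hD : CntB C a D (B + 1)) (hLE : C.E (C.pair (B + 1) L) D)
    {i j : M} (hi : i < L) (h : RF C i j (B + 2) a D B) :
    j < B + 1 ∧ (Jp C a j ∧ C.E (C.pair j i) D) := by
  obtain ⟨s, rfl, h⟩ := h
  rcases h with ⟨z, hzb, hzE, hiz, hjs, hJj, hEj⟩ | ⟨hno, _⟩
  · exact ⟨hjs, hJj, hEj⟩
  · exfalso
    have hLD : L < D := z_lt_of_E hM C hLE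
    rcases hno L hLD with hc | hc
    · exact hc hLE
    · exact hc hi

end MainRelations


/-! ### Layer 9: the covering contradiction and least indices -/

section Cover

variable {M : Type} [CommSemiring M] [LinearOrder M] [IsStrictOrderedRing M]
variable (hM : ModelsISigma1 M) (C : AckCoding M)
include hM

lemma least_proj (a x i0 : M) (h : C.proj a i0 = x) :
    ∃ l : M, C.proj a l = x ∧ (∀ k : M, k < l → C.proj a k ≠ x) ∧ l ≤ i0 := by
  classical
  set v : ℕ → M := fun k => if k = 1 then a else if k = 2 then x else 0 with hv
  have hx₀ : (fun w : ℕ → M => C.proj (w 1) (w 0) = w 2) (upd v 0 i0) := h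
  obtain ⟨l, hl, hmin⟩ := sig_lnp hM (P := fun w : ℕ → M => C.proj (w 1) (w 0) = w 2)
    (sigNProjk hM C 1 0 2) (fun _ => Iff.rfl) 0 v i0 hx₀
  refine ⟨l, hl, fun k hk => hmin k hk, ?_⟩
  by_contra hlt
  push_neg at hlt
  exact hmin i0 hlt h

lemma coverFalse {M₀ : Set M} (hsub : IsSubmodel M₀) (G a L' : M)
    (hvb : ∀ i y : M, C.E (C.pair i y) G → y ≤ a)
    (hvals : ∀ i y : M, i < L' → C.E (C.pair i y) G → y ∈ M₀)
    (hcov : ∀ x ∈ M₀, ∃ i, i < L' ∧ C.E (C.pair i x) G) : False := by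
  classical
  set P : (ℕ → M) → Prop := fun v => ∀ i < v 1, ∀ y < v 2,
    (¬ C.E (C.pair i y) (v 3) ∨ ¬ v 0 < y) with hP
  set Pn : (ℕ → M) → Prop := fun v => ∃ i, i < v 1 ∧ ∃ y, y < v 2 ∧
    (C.E (C.pair i y) (v 3) ∧ v 0 < y) with hPn
  have hSigPn : Sig Pn := by
    have hlt : Del (fun v : ℕ → M => v 0 < v 5) := by
      refine del_congr (fun v => ?_) (del_lt (.var 0) (.var 5))
      simp [Term.eval]
    exact Sig.bex 4 (.var 1) (by decide) (Sig.bex 5 (.var 2) (by decide)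
      ((sigEPk hM C 4 5 3).and hlt.sig))
  have hcompl : ∀ v, Pn v ↔ ¬ P v := by
    intro v
    constructor
    · rintro ⟨i, hi, y, hy, hE, hlt⟩ hPv
      rcases hPv i hi y hy with h | h
      · exact h hE
      · exact h hlt
    · intro hnP
      by_contra hno
      apply hnP
      intro i hi y hy
      by_cases hE : C.E (C.pair i y) (v 3)
      · right
        intro hlt
        exact hno ⟨i, hi, y, hy, hE, hlt⟩
      · exact Or.inl hE
  set v : ℕ → M := fun k => if k = 1 then L' else if k = 2 then a + 1 else
    if k = 3 then G else 0 with hv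
  have hPa : P (upd v 0 a) := by
    intro i _ y _
    by_cases hE : C.E (C.pair i y) G
    · exact Or.inr (not_lt.mpr (hvb i y hE))
    · exact Or.inl hE
  obtain ⟨m, hm, hmin⟩ := sig_lnp hM (P := P) hSigPn hcompl 0 v a hPa
  have hmub : ∀ i y : M, i < L' → y < a + 1 → C.E (C.pair i y) G → y ≤ m := by
    intro i y hi hy hE
    rcases hm i hi y hy with h | h
    · exact absurd hE h
    · exact not_lt.mp h
  -- m is attained
  have hatt : ∃ i, i < L' ∧ C.E (C.pair i m) G := by
    rcases (hM.1.1 m).eq_or_lt with h0 | hpos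
    · obtain ⟨i, hi, hE⟩ := hcov 0 hsub.1
      exact ⟨i, hi, by rw [← h0]; exact hE⟩
    · obtain ⟨m', hm'⟩ := pred_of_pos hM hpos
      have hm'lt : m' < m := by rw [hm']; exact lt_succ_self hM m'
      have hnP : ¬ P (upd v 0 m') := hmin m' hm'lt
      have hPn' : Pn (upd v 0 m') := (hcompl _).mpr hnP
      obtain ⟨i, hi, y, hy, hE, hlt⟩ := hPn'
      have hy1 : y ≤ m := hmub i y hi hy hE
      have hy2 : m ≤ y := by rw [hm']; exact hM.1.2 _ _ hlt
      have : y = m := le_antisymm hy1 hy2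
      exact ⟨i, hi, this ▸ hE⟩
  obtain ⟨i, hi, hE⟩ := hatt
  have hmM₀ : m ∈ M₀ := hvals i m hi hE
  have hm1 : m + 1 ∈ M₀ := hsub.2.2.1 m hmM₀ 1 hsub.2.1
  obtain ⟨i', hi', hE'⟩ := hcov (m + 1) hm1
  have hb : m + 1 < a + 1 := lt_add_one_iff hM |>.mpr (hvb i' (m + 1) hE')
  rcases hm i' hi' (m + 1) hb with h | h
  · exact h hE'
  · exact h (lt_succ_self hM m)

end Cover


/-! ### Layer 10: the main theorem -/

section Main

variable {M : Type} [CommSemiring M] [LinearOrder M] [IsStrictOrderedRing M]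

lemma main_ismall (hM : ModelsISigma1 M) (C : AckCoding M) (I : Set M)
    (hI : C.StrongCut I) (M₀ : Set M) (hsub : IsSubmodel M₀) (a : M)
    (ha : M₀ = {x | ∃ i ∈ I, C.proj a i = x}) : C.ISmall I M₀ := by
  classical
  obtain ⟨⟨hIne, hIuniv, hIdcl, hIsucc⟩, hstrong⟩ := hI
  have hB : ∃ B : M, ∀ i ∈ I, i < B := by
    have hex : ∃ B, B ∉ I := by
      by_contra h
      push_neg at h
      exact hIuniv (Set.eq_univ_of_forall h)
    obtain ⟨B, hB⟩ := hex
    refine ⟨B, fun i hi => ?_⟩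
    by_contra hle
    push_neg at hle
    exact hB (hIdcl i hi B hle)
  obtain ⟨B, hBI⟩ := hB
  obtain ⟨D, hD⟩ := cnt_exists hM C a (B + 1)
  obtain ⟨L, hLb, hLE⟩ := hD.2.1 (B + 1) (lt_succ_self hM _)
  have hLB1 : L ≤ B + 1 := c_le hM C hD (B + 1) L (lt_succ_self hM _) hLE
  obtain ⟨F, hF⟩ := graph_code hM C (RF C) (sigRF hM C) (RF_tot hM C hD hLE hLb) B
  obtain ⟨G, hG⟩ := graph_code hM C (RG C) (sigRG hM C) (RG_tot hM C hD hLE hLb) B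
  have hFval : ∀ {i j : M}, C.E (C.pair i j) F → RF C i j (B + 2) a D B :=
    fun h => gcode_val hM C (RF C) hF h
  have hGval : ∀ {i y : M}, C.E (C.pair i y) G → RG C i y (a + 1) a D B :=
    fun h => gcode_val hM C (RG C) hG h
  have hFfun : ∀ x y y' : M, C.E (C.pair x y) F → C.E (C.pair x y') F → y = y' :=
    fun x y y' h h' => gcode_fun hM C (RF C) hF (RF_fun hM C hD) h h'
  have hGfun : ∀ {x y y' : M}, C.E (C.pair x y) G → C.E (C.pair x y') G → y = y' :=
    fun h h' => gcode_fun hM C (RG C) hG (RG_fun hM C hD) h h'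
  have hFtot : ∀ i ∈ I, ∃ y, C.E (C.pair i y) F := by
    intro i hi
    obtain ⟨y, _, hy⟩ := hF.2 i (lt_trans (hBI i hi) (lt_succ_self hM B))
    exact ⟨y, hy⟩
  obtain ⟨e, heI, he⟩ := hstrong F hFfun hFtot
  have hGbound : ∀ i y : M, C.E (C.pair i y) G → y ≤ a := by
    intro i y h
    obtain ⟨s, rfl, hc⟩ := hGval h
    rcases hc with ⟨z, _, _, _, j, _, _, _, hpj⟩ | ⟨_, rfl⟩
    · rw [← hpj]
      exact proj_le hM C
    · exact hM.1.1 a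
  have hFjb : ∀ i j : M, C.E (C.pair i j) F → j < B + 2 := by
    intro i j h
    have hBB : B + 1 + 1 = B + 2 := by ring
    obtain ⟨s, rfl, hc⟩ := hFval h
    rcases hc with ⟨z, _, _, _, hjs, _, _⟩ | ⟨_, rfl⟩
    · exact hBB ▸ lt_trans hjs (lt_succ_self hM _)
    · exact hBB ▸ zero_lt_succ hM (B + 1)
  -- covering data for elements of M₀
  have hkey : ∀ x ∈ M₀, ∃ ci l : M, ci ∈ I ∧ ci < L ∧ C.E (C.pair ci x) G ∧
      l ∈ I ∧ Jp C a l ∧ C.E (C.pair l ci) D := by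
    intro x hx
    rw [ha] at hx
    obtain ⟨i0, hi0I, hpi0⟩ := hx
    obtain ⟨l, hl, hlmin, hli0⟩ := least_proj hM C a x i0 hpi0
    have hlI : l ∈ I := hIdcl i0 hi0I l hli0
    have hJl : Jp C a l := by
      intro k hk
      rw [hl]
      exact hlmin k hk
    have hlB : l < B := hBI l hlI
    have hlB2 : l < B + 1 + 1 := lt_trans hlB (lt_trans (lt_succ_self hM B)
      (lt_succ_self hM _))
    obtain ⟨ci, hciD, hciE⟩ := hD.2.1 l hlB2
    have hcil : ci ≤ l := c_le hM C hD l ci hlB2 hciE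
    have hciI : ci ∈ I := hIdcl l hlI ci hcil
    have hl1B : l + 1 < B + 1 + 1 := by
      have : l + 1 ≤ B + 1 := (hM.1.2 l B hlB).trans (le_add_of_nonneg_right zero_le_one)
      exact lt_of_le_of_lt this (lt_succ_self hM _)
    obtain ⟨ci', _, hci'E⟩ := hD.2.1 (l + 1) hl1B
    have hci' : ci' = ci + 1 :=
      (c_succ hM C hD (lt_trans hlB (lt_succ_self hM B)) hciE hci'E).1 hJl
    obtain ⟨t, ht⟩ := sub_of_le hM (show l + 1 ≤ B + 1 from
      (hM.1.2 l B hlB).trans (le_add_of_nonneg_right zero_le_one))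
    have hmono := c_mono hM C hD t (l + 1) ci' L
      (by rw [ht]; exact lt_succ_self hM (B + 1)) hci'E (by rw [ht]; exact hLE)
    rw [hci'] at hmono
    have hciL : ci < L := lt_of_lt_of_le (lt_succ_self hM ci) hmono
    have hjB1 : l < B + 1 := lt_trans hlB (lt_succ_self hM B)
    have hRG : RG C ci x (a + 1) a D B :=
      ⟨B + 1, rfl, Or.inl ⟨L, z_lt_of_E hM C hLE, hLE, hciL, l, hjB1, hJl, hciE, hl⟩⟩
    obtain ⟨y, _, hyE⟩ := hG.2 ci (lt_of_le_of_lt hcil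
      (lt_trans hlB (lt_succ_self hM B)))
    have hyx : y = x := RG_fun hM C hD ci y x (hGval hyE) hRG
    exact ⟨ci, l, hciI, hciL, hyx ▸ hyE, hlI, hJl, hciE⟩
  -- Claim: all of I is below L and f maps I into I
  have hclaim : ∀ i ∈ I, i < L ∧ ∀ j : M, C.E (C.pair i j) F → j ∈ I := by
    by_contra hcon
    push_neg at hcon
    obtain ⟨i₂, hi₂I, hbad⟩ := hcon
    set P : (ℕ → M) → Prop := fun v => ¬ v 0 < v 1 ∨ ∃ j, j < v 4 ∧
      (C.E (C.pair (v 0) j) (v 2) ∧ ¬ j < v 3) with hPdef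
    set Pn : (ℕ → M) → Prop := fun v => v 0 < v 1 ∧ ∀ j < v 4,
      (¬ C.E (C.pair (v 0) j) (v 2) ∨ j < v 3) with hPndef
    have hSigPn : Sig Pn := by
      have h1 : Del (fun v : ℕ → M => v 0 < v 1) := by
        refine del_congr (fun v => ?_) (del_lt (.var 0) (.var 1))
        simp [Term.eval]
      have h2 : Del (fun v : ℕ → M => v 5 < v 3) := by
        refine del_congr (fun v => ?_) (del_lt (.var 5) (.var 3))
        simp [Term.eval]
      exact h1.sig.and (Sig.ball hM 5 (.var 4) (by decide)
        ((sigNEPk hM C 0 5 2).or h2.sig))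
    have hcompl : ∀ v, Pn v ↔ ¬ P v := by
      intro v
      simp only [hPdef, hPndef]
      constructor
      · rintro ⟨h1, h2⟩ hp
        rcases hp with hp | ⟨j, hj, hE, hne⟩
        · exact hp h1
        · rcases h2 j hj with h | h
          · exact h hE
          · exact hne h
      · intro hp
        push_neg at hp
        obtain ⟨h1, h2⟩ := hp
        refine ⟨h1, fun j hj => ?_⟩
        by_cases hE : C.E (C.pair (v 0) j) (v 2)
        · exact Or.inr (h2 j hj hE)
        · exact Or.inl hE
    set w : ℕ → M := fun k => if k = 1 then L else if k = 2 then F else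
      if k = 3 then e else if k = 4 then B + 2 else 0 with hw
    have hPx₀ : P (upd w 0 i₂) := by
      show ¬ i₂ < L ∨ ∃ j, j < B + 2 ∧ (C.E (C.pair i₂ j) F ∧ ¬ j < e)
      by_cases hL2 : i₂ < L
      · right
        have hb2 := hbad hL2
        obtain ⟨j, hjE, hjnI⟩ := hb2
        refine ⟨j, hFjb i₂ j hjE, hjE, fun hje => hjnI ((he i₂ hi₂I j hjE).mpr hje)⟩
      · exact Or.inl hL2
    obtain ⟨i₁, hPi₁, hmin⟩ := sig_lnp hM hSigPn hcompl 0 w i₂ hPx₀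
    have hi₁I : i₁ ∈ I := by
      refine hIdcl i₂ hi₂I i₁ ?_
      by_contra hgt
      push_neg at hgt
      exact hmin i₂ hgt hPx₀
    refine coverFalse hM C hsub G a i₁ hGbound ?_ ?_
    · intro i y hi hE
      have hiI : i ∈ I := hIdcl i₁ hi₁I i (le_of_lt hi)
      have hPn' : Pn (upd w 0 i) := (hcompl _).mpr (hmin i hi)
      have hPn'' : i < L ∧ ∀ j < B + 2, (¬ C.E (C.pair i j) F ∨ j < e) := hPn'
      obtain ⟨hiL, hjall⟩ := hPn''
      obtain ⟨j, hjB, hJj, hEj, hpj⟩ := RG_left hM C hD hLE hiL (hGval hE)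
      have hRFj : RF C i j (B + 2) a D B :=
        ⟨B + 1, rfl, Or.inl ⟨L, z_lt_of_E hM C hLE, hLE, hiL, hjB, hJj, hEj⟩⟩
      obtain ⟨j₀, _, hj₀E⟩ := hF.2 i (lt_of_lt_of_le hiL hLB1)
      have hj₀ : j₀ = j := RF_fun hM C hD i j₀ j (hFval hj₀E) hRFj
      rw [hj₀] at hj₀E
      have hje : j < e := by
        rcases hjall j (hFjb i j hj₀E) with h | h
        · exact absurd hj₀E h
        · exact h
      have hjI : j ∈ I := (he i hiI j hj₀E).mpr hje
      rw [ha]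
      exact ⟨j, hjI, hpj⟩
    · intro x hx
      obtain ⟨ci, lx, hciI, hciL, hciE, hlxI, hJlx, hElx⟩ := hkey x hx
      refine ⟨ci, ?_, hciE⟩
      by_contra hge
      push_neg at hge
      have hPi₁' : ¬ i₁ < L ∨ ∃ j, j < B + 2 ∧ (C.E (C.pair i₁ j) F ∧ ¬ j < e) := hPi₁
      have hi₁L : i₁ < L := lt_of_le_of_lt hge hciL
      rcases hPi₁' with hnL | ⟨j, _, hjE, hjne⟩
      · exact hnL hi₁L
      · obtain ⟨hjB1, hJj, hEj⟩ := RF_left hM C hD hLE hi₁L (hFval hjE)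
        have hjnI : j ∉ I := fun hjI => hjne ((he i₁ hi₁I j hjE).mp hjI)
        have hlxj : lx < j := by
          by_contra hle
          push_neg at hle
          exact hjnI (hIdcl lx hlxI j hle)
        -- counting: c(lx + 1) = ci + 1 ≤ c(j) = i₁ ≤ ci, contradiction
        have hlxB : lx < B := hBI lx hlxI
        have hlx1B : lx + 1 < B + 1 + 1 := by
          have : lx + 1 ≤ B + 1 :=
            (hM.1.2 lx B hlxB).trans (le_add_of_nonneg_right zero_le_one)
          exact lt_of_le_of_lt this (lt_succ_self hM _)
        obtain ⟨ci', _, hci'E⟩ := hD.2.1 (lx + 1) hlx1B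
        have hci' : ci' = ci + 1 :=
          (c_succ hM C hD (lt_trans hlxB (lt_succ_self hM B)) hElx hci'E).1 hJlx
        obtain ⟨t, ht⟩ := sub_of_le hM (hM.1.2 lx j hlxj)
        have hmono := c_mono hM C hD t (lx + 1) ci' i₁
          (by rw [ht]; exact lt_trans hjB1 (lt_succ_self hM _)) hci'E
          (by rw [ht]; exact hEj)
        rw [hci'] at hmono
        have : ci < ci := lt_of_lt_of_le (lt_of_lt_of_le (lt_succ_self hM ci) hmono) hge
        exact lt_irrefl _ this
  -- characterization of proj G
  have hprojG : ∀ i y : M, C.E (C.pair i y) G → C.proj G i = y := by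
    intro i y hE
    have hu : UniqueZ C G i := ⟨y, hE, fun z' hz' => hGfun hz' hE⟩
    exact ((proj_spec_unique C hu).2 y hE).symm
  -- value data for i ∈ I
  have hIdata : ∀ i ∈ I, ∃ y j : M, C.proj G i = y ∧ j ∈ I ∧ Jp C a j ∧
      C.E (C.pair j i) D ∧ C.proj a j = y := by
    intro i hi
    have hiL : i < L := (hclaim i hi).1
    obtain ⟨y, _, hyE⟩ := hG.2 i (lt_trans (hBI i hi) (lt_succ_self hM B))
    obtain ⟨j, hjB, hJj, hEj, hpj⟩ := RG_left hM C hD hLE hiL (hGval hyE)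
    have hRFj : RF C i j (B + 2) a D B :=
      ⟨B + 1, rfl, Or.inl ⟨L, z_lt_of_E hM C hLE, hLE, hiL, hjB, hJj, hEj⟩⟩
    obtain ⟨j₀, _, hj₀E⟩ := hF.2 i (lt_of_lt_of_le hiL hLB1)
    have hj₀ : j₀ = j := RF_fun hM C hD i j₀ j (hFval hj₀E) hRFj
    rw [hj₀] at hj₀E
    have hjI : j ∈ I := (hclaim i hi).2 j hj₀E
    exact ⟨y, j, hprojG i y hyE, hjI, hJj, hEj, hpj⟩
  refine ⟨G, ?_, ?_⟩
  · -- the image condition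
    ext x
    simp only [Set.mem_setOf_eq]
    constructor
    · intro hx
      obtain ⟨ci, lx, hciI, hciL, hciE, _, _, _⟩ := hkey x hx
      exact ⟨ci, hciI, hprojG ci x hciE⟩
    · rintro ⟨i, hiI, hpi⟩
      obtain ⟨y, j, hpG, hjI, hJj, hEj, hpj⟩ := hIdata i hiI
      rw [ha]
      refine ⟨j, hjI, ?_⟩
      rw [hpj, ← hpi, hpG]
  · -- injectivity
    intro i hi k hk hik heq
    obtain ⟨y, j, hpG, hjI, hJj, hEj, hpj⟩ := hIdata i hi
    obtain ⟨y', j', hpG', hjI', hJj', hEj', hpj'⟩ := hIdata k hk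
    have hyy : y = y' := by rw [← hpG, ← hpG', heq]
    have hjj : j = j' := by
      rcases lt_trichotomy j j' with h | h | h
      · exact absurd (hpj.trans (hyy.trans hpj'.symm)) (hJj' j h)
      · exact h
      · exact absurd (hpj'.trans (hyy.symm.trans hpj.symm)) (hJj j' h)
    rw [hjj] at hEj
    exact hik (c_unique hM C hD hEj hEj')

end Main


/-- if `I` is a strong cut of a nonstandard `M ⊨ IΣ₁` and
`M₀ = {(a)_i : i ∈ I}` is a submodel of `M`, then `M₀` is `I`-small. -/
theorem strong_cut_indexed_submodel_is_ISmall {M : Type} [CommSemiring M] [LinearOrder M] [IsStrictOrderedRing M]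
    (hM : ModelsISigma1 M) (hNS : Nonstandard M) (C : AckCoding M)
    (I : Set M) (hI : C.StrongCut I)
    (M₀ : Set M) (hsub : IsSubmodel M₀) (a : M)
    (ha : M₀ = {x | ∃ i ∈ I, C.proj a i = x}) :
    C.ISmall I M₀ := by
  exact main_ismall hM C I hI M₀ hsub a ha

end ISigma
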